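/- arXiv:1402.5646 — 9 statements merged into one kernel-verified Lean document; each statement's English description precedes it below -/
import Mathlib

section
/- Let X be a finite set and F ⊆ P(X) a saturated k-Sperner system. If H₁ and H₂ are both homogeneous sets for F, then H₁ = H₂. -/
open Finset

variable {α : Type*} [DecidableEq α]

/-- `HasChain 𝒜 m` : the family `𝒜` contains a chain of `m` sets under strict inclusion. -/
def HasChain (𝒜 : Finset (Finset α)) (m : ℕ) : Prop :=
  ∃ C : Fin m → Finset α, StrictMono C ∧ ∀ i, C i ∈ 𝒜

/-- `IsSatSperner X 𝒜 k` : `𝒜 ⊆ 𝒫(X)` is a saturated `k`-Sperner system. -/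
def IsSatSperner (X : Finset α) (𝒜 : Finset (Finset α)) (k : ℕ) : Prop :=
  (∀ A ∈ 𝒜, A ⊆ X) ∧ ¬ HasChain 𝒜 (k + 1) ∧
    ∀ S ⊆ X, S ∉ 𝒜 → HasChain (insert S 𝒜) (k + 1)

/-- `A` meets every member of `𝒜` in `∅` or all of `A`. -/
def AtomProp (𝒜 : Finset (Finset α)) (A : Finset α) : Prop :=
  ∀ S ∈ 𝒜, S ∩ A = ∅ ∨ A ⊆ S

/-- `H` is homogeneous for `𝒜` within ground set `X`. -/
def IsHomog (X : Finset α) (𝒜 : Finset (Finset α)) (H : Finset α) : Prop :=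
  H ⊆ X ∧ 2 ≤ H.card ∧ AtomProp 𝒜 H ∧
    ∀ H' : Finset α, H' ⊆ X → H ⊆ H' → AtomProp 𝒜 H' → H' = H

/-- `𝒜 ⊆ 𝒫(X)` is a saturated antichain. -/
def IsSatAntichain (X : Finset α) (𝒜 : Finset (Finset α)) : Prop :=
  (∀ A ∈ 𝒜, A ⊆ X) ∧ (∀ A ∈ 𝒜, ∀ B ∈ 𝒜, ¬ A ⊂ B) ∧
    ∀ S ⊆ X, S ∉ 𝒜 → ∃ A ∈ 𝒜, A ⊂ S ∨ S ⊂ A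

/-- The number of chains of `m` sets in `𝒜`. -/
noncomputable def chainCount (𝒜 : Finset (Finset α)) (m : ℕ) : ℕ :=
  Nat.card {C : Fin m → Finset α // StrictMono C ∧ ∀ i, C i ∈ 𝒜}

/-- `𝒜 ⊆ 𝒫(X)` is an oversaturated `k`-Sperner system. -/
def IsOversat (X : Finset α) (𝒜 : Finset (Finset α)) (k : ℕ) : Prop :=
  (∀ A ∈ 𝒜, A ⊆ X) ∧
    ∀ S ⊆ X, S ∉ 𝒜 → chainCount 𝒜 (k + 1) < chainCount (insert S 𝒜) (k + 1)

/-- Minimal elements of a family under strict inclusion. -/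
def minimalSets (ℬ : Finset (Finset α)) : Finset (Finset α) :=
  ℬ.filter fun A => ∀ B ∈ ℬ, ¬ B ⊂ A

/-- What remains of `𝒜` after removing the first `i` layers of minimal elements. -/
def canonRest (𝒜 : Finset (Finset α)) : ℕ → Finset (Finset α)
  | 0 => 𝒜
  | i + 1 => canonRest 𝒜 i \ minimalSets (canonRest 𝒜 i)

/-- The `i`-th layer of the canonical decomposition of `𝒜` into antichains. -/
def canonLayer (𝒜 : Finset (Finset α)) (i : ℕ) : Finset (Finset α) :=
  minimalSets (canonRest 𝒜 i)

/-- `satFn n k` : minimum size of a saturated `k`-Sperner system on a ground set of size `n`. -/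
noncomputable def satFn (n k : ℕ) : ℕ :=
  sInf {m | ∃ 𝒜 : Finset (Finset (Fin n)), IsSatSperner Finset.univ 𝒜 k ∧ 𝒜.card = m}

/-!
Suppose some `W ∈ F` contains `H₁` and misses `H₂`. Trade a point `a ∈ H₁` of `W` for a point
`c ∈ H₂`: the resulting set `T` splits `H₂`, so `T ∉ F`, and saturation yields a `(k+1)`-chain in
`F ∪ {T}` through `T`. A member of `F` below `T` cannot contain `c` (it would contain `H₂`), so it
lies strictly below `W`; a member above `T` meets `H₁`, hence contains `a`, so it lies strictly
above `W`. Replacing `T` by `W` gives a `(k+1)`-chain in `F`, which is impossible. Therefore every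
member of `F` meets `H₁ ∪ H₂` in `∅` or in all of it, and maximality gives `H₁ = H₁ ∪ H₂ = H₂`.
-/

lemma HasChain.of_insert {𝒜 : Finset (Finset α)} {T W : Finset α} {m : ℕ} (hW : W ∈ 𝒜)
    (below : ∀ S ∈ 𝒜, S ⊂ T → S ⊂ W) (above : ∀ S ∈ 𝒜, T ⊂ S → W ⊂ S)
    (h : HasChain (insert T 𝒜) m) : HasChain 𝒜 m := by
  obtain ⟨C, hmono, hmem⟩ := h
  have mem_of_ne : ∀ i, C i ≠ T → C i ∈ 𝒜 := fun i hi => (mem_insert.mp (hmem i)).resolve_left hi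
  refine ⟨fun i => if C i = T then W else C i, fun i j hij => ?_, fun i => ?_⟩
  · have hC := hmono hij
    by_cases hi : C i = T <;> by_cases hj : C j = T <;> simp only [hi, hj, if_true, if_false]
    · exact absurd (hi.trans hj.symm) hC.ne
    · exact above _ (mem_of_ne j hj) (hi ▸ hC)
    · exact below _ (mem_of_ne i hi) (hj ▸ hC)
    · exact hC
  · dsimp only
    split_ifs with hi
    exacts [hW, mem_of_ne i hi]

lemma AtomProp.subset_of_mem {𝒜 : Finset (Finset α)} {A S : Finset α} {x : α}
    (hA : AtomProp 𝒜 A) (hS : S ∈ 𝒜) (hxS : x ∈ S) (hxA : x ∈ A) : A ⊆ S :=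
  (hA S hS).resolve_left (nonempty_iff_ne_empty.mp ⟨x, mem_inter.mpr ⟨hxS, hxA⟩⟩)

variable {X : Finset α} {F : Finset (Finset α)} {k : ℕ}

lemma IsSatSperner.not_subset_of_inter_eq_empty (hF : IsSatSperner X F k) {H₁ H₂ W : Finset α}
    (hatom₁ : AtomProp F H₁) (hatom₂ : AtomProp F H₂) (hcard₁ : 1 < H₁.card)
    (hcard₂ : 1 < H₂.card) (hH₂X : H₂ ⊆ X) (hW : W ∈ F) (hW₂ : W ∩ H₂ = ∅) : ¬ H₁ ⊆ W := by
  intro hW₁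
  obtain ⟨a, ha, b, hb, hab⟩ := one_lt_card.mp hcard₁
  obtain ⟨c, hc, d, hd, hcd⟩ := one_lt_card.mp hcard₂
  have hcW : c ∉ W := disjoint_right.mp (disjoint_iff_inter_eq_empty.mpr hW₂) hc
  have hdW : d ∉ W := disjoint_right.mp (disjoint_iff_inter_eq_empty.mpr hW₂) hd
  set T := insert c (W.erase a)
  have hcT : c ∈ T := mem_insert_self c _
  have hdT : d ∉ T := by simp [T, hcd.symm, hdW]
  have hbT : b ∈ T := mem_insert_of_mem (mem_erase.mpr ⟨hab.symm, hW₁ hb⟩)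
  have hTX : T ⊆ X := insert_subset (hH₂X hc) ((erase_subset a W).trans (hF.1 W hW))
  have hTF : T ∉ F := fun hTF => hdT (hatom₂.subset_of_mem hTF hcT hc hd)
  have below : ∀ S ∈ F, S ⊂ T → S ⊂ W := by
    intro S hS hST
    have hcS : c ∉ S := fun hcS => hdT (hST.subset (hatom₂.subset_of_mem hS hcS hc hd))
    have : S ⊆ W.erase a := (subset_insert_iff_of_notMem hcS).mp hST.subset
    exact this.trans_ssubset (erase_ssubset (hW₁ ha))
  have above : ∀ S ∈ F, T ⊂ S → W ⊂ S := by
    intro S hS hTS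
    have haS : a ∈ S := hatom₁.subset_of_mem hS (hTS.subset hbT) hb ha
    have hWS : W ⊆ S := by
      rw [← insert_erase (hW₁ ha)]
      exact insert_subset haS ((subset_insert c _).trans hTS.subset)
    exact (ssubset_iff_of_subset hWS).mpr ⟨c, hTS.subset hcT, hcW⟩
  exact hF.2.1 ((hF.2.2 T hTX hTF).of_insert hW below above)

lemma IsSatSperner.atomProp_union (hF : IsSatSperner X F k) {H₁ H₂ : Finset α}
    (h₁ : IsHomog X F H₁) (h₂ : IsHomog X F H₂) : AtomProp F (H₁ ∪ H₂) := by
  intro S hS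
  rcases h₁.2.2.1 S hS with hS₁ | hS₁ <;> rcases h₂.2.2.1 S hS with hS₂ | hS₂
  · left
    rw [inter_union_distrib_left, hS₁, hS₂, union_empty]
  · exact absurd hS₂ (hF.not_subset_of_inter_eq_empty h₂.2.2.1 h₁.2.2.1 h₂.2.1 h₁.2.1 h₁.1 hS hS₁)
  · exact absurd hS₁ (hF.not_subset_of_inter_eq_empty h₁.2.2.1 h₂.2.2.1 h₁.2.1 h₂.2.1 h₂.1 hS hS₂)
  · exact Or.inr (union_subset hS₁ hS₂)

theorem stmt_2 (X : Finset α) (F : Finset (Finset α)) (k : ℕ)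
    (hF : IsSatSperner X F k) (H₁ H₂ : Finset α)
    (h1 : IsHomog X F H₁) (h2 : IsHomog X F H₂) : H₁ = H₂ := by
  have hU := hF.atomProp_union h1 h2
  have hUX : H₁ ∪ H₂ ⊆ X := union_subset h1.1 h2.1
  calc H₁ = H₁ ∪ H₂ := (h1.2.2.2 _ hUX subset_union_left hU).symm
    _ = H₂ := h2.2.2.2 _ hUX subset_union_right hU
end

section
/- Let A ⊆ P(X) be a saturated antichain (saturated 1-Sperner system) with homogeneous set H. Then every set S ∈ P(X) \ A either contains some small set of A (a set B ∈ A with B ∩ H = ∅) or is contained in some large set of A (a set B ∈ A with H ⊆ B). -/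
open Finset

variable {α : Type*} [DecidableEq α]

/-! Fix `h ∈ H` and put `T = {h} ∪ (S \ H)`. Since `T` meets `H` in the single point `h` and
`|H| ≥ 2`, every member of `𝒜` below `T` is small and `T ∉ 𝒜`. Saturation makes `T` comparable
with some `B ∈ 𝒜`: if `B ⊂ T` then `B` is small, hence `B ⊆ T \ H ⊆ S`; if `T ⊂ B` then `h ∈ B`
makes `B` large, hence `S ⊆ H ∪ T ⊆ B`. -/

namespace AtomProp

variable {𝒜 : Finset (Finset α)} {H C T : Finset α}

theorem subset_of_inter_nonempty (hA : AtomProp 𝒜 H) (hC : C ∈ 𝒜) (hCH : (C ∩ H).Nonempty) :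
    H ⊆ C :=
  (hA C hC).resolve_left hCH.ne_empty

theorem inter_eq_empty_of_subset (hA : AtomProp 𝒜 H) (hC : C ∈ 𝒜) (hCT : C ⊆ T)
    (hHT : ¬ H ⊆ T) : C ∩ H = ∅ :=
  (hA C hC).resolve_right fun hHC => hHT (hHC.trans hCT)

end AtomProp

theorem Finset.not_subset_insert_sdiff {H : Finset α} (hH : 1 < #H) (h : α) (S : Finset α) :
    ¬ H ⊆ insert h (S \ H) := by
  obtain ⟨h', hh'H, hh'h⟩ := H.exists_mem_ne hH h
  intro hsub
  rcases mem_insert.mp (hsub hh'H) with rfl | hh'S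
  · exact hh'h rfl
  · exact (mem_sdiff.mp hh'S).2 hh'H

theorem stmt_3 (X : Finset α) (𝒜 : Finset (Finset α)) (H : Finset α)
    (h𝒜 : IsSatAntichain X 𝒜) (hH : IsHomog X 𝒜 H) :
    ∀ S ⊆ X, S ∉ 𝒜 →
      (∃ B ∈ 𝒜, B ∩ H = ∅ ∧ B ⊆ S) ∨ (∃ B ∈ 𝒜, H ⊆ B ∧ S ⊆ B) := by
  intro S hSX _
  obtain ⟨hHX, hHcard, hatom, -⟩ := hH
  obtain ⟨h, hh⟩ : H.Nonempty := card_pos.mp (by omega)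
  set T := insert h (S \ H)
  have hHT : ¬ H ⊆ T := not_subset_insert_sdiff (by omega) h S
  have hhT : h ∈ T := mem_insert_self h _
  have hTX : T ⊆ X := insert_subset (hHX hh) (sdiff_subset.trans hSX)
  have hTA : T ∉ 𝒜 := fun hT =>
    hHT (hatom.subset_of_inter_nonempty hT ⟨h, mem_inter.mpr ⟨hhT, hh⟩⟩)
  obtain ⟨B, hB, hBT | hTB⟩ := h𝒜.2.2 T hTX hTA
  · have hBH : B ∩ H = ∅ := hatom.inter_eq_empty_of_subset hB hBT.subset hHT
    refine Or.inl ⟨B, hB, hBH, ?_⟩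
    calc B ⊆ T \ H := subset_sdiff.mpr ⟨hBT.subset, disjoint_iff_inter_eq_empty.mpr hBH⟩
      _ = (S \ H) \ H := insert_sdiff_of_mem _ hh
      _ ⊆ S := sdiff_subset.trans sdiff_subset
  · have hHB : H ⊆ B :=
      hatom.subset_of_inter_nonempty hB ⟨h, mem_inter.mpr ⟨hTB.subset hhT, hh⟩⟩
    refine Or.inr ⟨B, hB, hHB, ?_⟩
    calc S ⊆ H ∪ S := subset_union_right
      _ = H ∪ (S \ H) := union_sdiff_self_eq_union.symm
      _ ⊆ B := union_subset hHB ((subset_insert h _).trans hTB.subset)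
end

section
/- Let (A_i)_{i=0}^{t} be a layered sequence of pairwise disjoint saturated antichains in P(X), meaning for each 1 ≤ i ≤ t every D ∈ A_i strictly contains some D' ∈ A_{i-1}. Then for each 0 ≤ i ≤ t-1, every A ∈ A_i is strictly contained in some B ∈ A_{i+1}. -/
open Finset

variable {α : Type*} [DecidableEq α]

omit [DecidableEq α] in
/-- If a member `B` of `ℬ` lay strictly below `A ∈ 𝒜`, the member of `𝒜` below `B` would lie strictly
below `A`; so saturation of `ℬ` leaves only a member strictly above `A`. -/
theorem IsSatAntichain.exists_ssuperset_of_forall_exists_ssubset {X : Finset α}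
    {𝒜 ℬ : Finset (Finset α)} (h𝒜X : ∀ A ∈ 𝒜, A ⊆ X) (h𝒜 : ∀ A ∈ 𝒜, ∀ A' ∈ 𝒜, ¬ A ⊂ A')
    (hℬ : IsSatAntichain X ℬ) (hdisj : Disjoint 𝒜 ℬ) (hlay : ∀ B ∈ ℬ, ∃ A ∈ 𝒜, A ⊂ B)
    {A : Finset α} (hA : A ∈ 𝒜) : ∃ B ∈ ℬ, A ⊂ B := by
  obtain ⟨B, hB, hBA | hAB⟩ := hℬ.2.2 A (h𝒜X A hA) (disjoint_left.mp hdisj hA)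
  · obtain ⟨A', hA', hA'B⟩ := hlay B hB
    exact absurd (hA'B.trans hBA) (h𝒜 A' hA' A hA)
  · exact ⟨B, hB, hAB⟩

theorem stmt_4 (X : Finset α) (t : ℕ) (𝒜 : ℕ → Finset (Finset α))
    (hsat : ∀ i ≤ t, IsSatAntichain X (𝒜 i))
    (hdisj : ∀ i ≤ t, ∀ j ≤ t, i ≠ j → Disjoint (𝒜 i) (𝒜 j))
    (hlay : ∀ i, 1 ≤ i → i ≤ t → ∀ D ∈ 𝒜 i, ∃ D' ∈ 𝒜 (i - 1), D' ⊂ D) :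
    ∀ i < t, ∀ A ∈ 𝒜 i, ∃ B ∈ 𝒜 (i + 1), A ⊂ B := by
  intro i hi A hA
  obtain ⟨h𝒜X, h𝒜, -⟩ := hsat i hi.le
  have hlay_succ := hlay (i + 1) (Nat.le_add_left 1 i) hi
  rw [Nat.add_sub_cancel] at hlay_succ
  exact IsSatAntichain.exists_ssuperset_of_forall_exists_ssubset h𝒜X h𝒜 (hsat (i + 1) hi)
    (hdisj i hi.le (i + 1) hi (Nat.succ_ne_self i).symm) hlay_succ hA
end

section
/- Let (A_i)_{i=0}^{k-1} be a layered sequence of pairwise disjoint saturated antichains in P(X). Then F := ⋃_{i=0}^{k-1} A_i is a saturated k-Sperner system. -/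
open Finset

variable {α : Type*} [DecidableEq α]

/-!
By layering, every member of `𝒜 i` contains a member of each earlier layer, so the antichain
property forbids a strict inclusion from a member of a layer into a member of the same or an
earlier layer: along a chain the layer index strictly increases, and a chain has at most `k` sets.
For `S ∉ ⋃ 𝒜 i`, let `t` be the first layer with no member below `S`. Layering yields a chain through
layers `0, …, t - 1` ending below `S`; saturation of layer `t` gives a member above `S`, and
saturation plus disjointness of the later layers extend it upwards through layer `k - 1`. Together
with `S` these are `k + 1` sets.
-/

section LayeredAntichains

variable {β : Type*} {X : Finset β} {k : ℕ} {𝒜 : ℕ → Finset (Finset β)}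

theorem hasChain_of_isChain {ℱ : Finset (Finset β)} {l : List (Finset β)}
    (hl : l.IsChain (· < ·)) (hℱ : ∀ A ∈ l, A ∈ ℱ) : HasChain ℱ l.length :=
  ⟨l.get, hl.sortedLT.strictMono_get, fun i => hℱ _ (l.get_mem i)⟩

theorem IsSatAntichain.isAntichain {ℱ : Finset (Finset β)} (h : IsSatAntichain X ℱ) :
    IsAntichain (· ⊆ ·) (ℱ : Set (Finset β)) :=
  fun A hA B hB hAB hsub => h.2.1 A hA B hB (ssubset_of_subset_of_ne hsub hAB)

def IsLayered (k : ℕ) (𝒜 : ℕ → Finset (Finset β)) : Prop :=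
  ∀ i, 1 ≤ i → i < k → ∀ D ∈ 𝒜 i, ∃ D' ∈ 𝒜 (i - 1), D' ⊂ D

theorem IsLayered.exists_ssubset (hlay : IsLayered k 𝒜) {i j : ℕ} (hji : j < i) (hik : i < k)
    {B : Finset β} (hB : B ∈ 𝒜 i) : ∃ D ∈ 𝒜 j, D ⊂ B := by
  induction i, hji using Nat.le_induction generalizing B with
  | base => simpa using hlay (j + 1) (by omega) hik B hB
  | succ n hjn ih =>
    obtain ⟨B', hB', hB'B⟩ := hlay (n + 1) (by omega) hik B hB
    obtain ⟨D, hD, hDB'⟩ := ih (by omega) hB'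
    exact ⟨D, hD, hDB'.trans hB'B⟩

theorem IsLayered.not_ssubset (hlay : IsLayered k 𝒜)
    (hanti : ∀ i < k, IsAntichain (· ⊆ ·) (𝒜 i : Set (Finset β))) {i j : ℕ} (hji : j ≤ i)
    (hik : i < k) {B C : Finset β} (hB : B ∈ 𝒜 i) (hC : C ∈ 𝒜 j) : ¬ B ⊂ C := by
  intro hBC
  rcases hji.lt_or_eq with hji | rfl
  · obtain ⟨D, hD, hDB⟩ := hlay.exists_ssubset hji hik hB
    exact (hanti j (by omega)).not_lt hD hC (hDB.trans hBC)
  · exact (hanti j hik).not_lt hB hC hBC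

variable [DecidableEq β]

theorem IsLayered.not_hasChain_succ (hlay : IsLayered k 𝒜)
    (hanti : ∀ i < k, IsAntichain (· ⊆ ·) (𝒜 i : Set (Finset β))) :
    ¬ HasChain ((range k).biUnion 𝒜) (k + 1) := by
  rintro ⟨C, hC, hCmem⟩
  have hlevel : ∀ i, ∃ j : Fin k, C i ∈ 𝒜 j := fun i => by
    obtain ⟨j, hj, hCj⟩ := mem_biUnion.mp (hCmem i)
    exact ⟨⟨j, mem_range.mp hj⟩, hCj⟩
  choose ℓ hℓ using hlevel
  have hℓmono : StrictMono ℓ := fun i j hij => by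
    by_contra! hle
    exact hlay.not_ssubset hanti hle (ℓ i).2 (hℓ i) (hℓ j) (hC hij)
  simpa using Fintype.card_le_of_injective ℓ hℓmono.injective

theorem IsLayered.exists_isChain_below (hlay : IsLayered k 𝒜) :
    ∀ t ≤ k, ∀ S : Finset β, (∀ j < t, ∃ B ∈ 𝒜 j, B ⊂ S) →
      ∃ l : List (Finset β), l.length = t ∧ (l ++ [S]).IsChain (· < ·) ∧
        ∀ C ∈ l, C ∈ (range k).biUnion 𝒜 := by
  intro t
  induction t with
  | zero => exact fun _ _ _ => ⟨[], rfl, by simp, by simp⟩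
  | succ t ih =>
    intro htk S hbelow
    obtain ⟨B, hB, hBS⟩ := hbelow t (by omega)
    obtain ⟨l, hlen, hl, hlF⟩ :=
      ih (by omega) B fun j hj => hlay.exists_ssubset hj (by omega) hB
    refine ⟨l ++ [B], by simpa, hl.append_overlap (by simpa using hBS) (by simp), ?_⟩
    simp only [List.mem_append, List.mem_singleton]
    rintro C (hC | rfl)
    · exact hlF C hC
    · exact mem_biUnion.mpr ⟨t, mem_range.mpr (by omega), hB⟩

theorem IsLayered.exists_isChain_above (hlay : IsLayered k 𝒜)
    (hsat : ∀ i < k, IsSatAntichain X (𝒜 i))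
    (hdisj : ∀ i < k, ∀ j < k, i ≠ j → Disjoint (𝒜 i) (𝒜 j)) :
    ∀ n t, n + t = k → ∀ S ⊆ X, (t < k → S ∉ 𝒜 t ∧ ∀ B ∈ 𝒜 t, ¬ B ⊂ S) →
      ∃ l : List (Finset β), l.length = n ∧ (S :: l).IsChain (· < ·) ∧
        ∀ C ∈ l, C ∈ (range k).biUnion 𝒜 := by
  intro n
  induction n with
  | zero => exact fun _ _ _ _ _ => ⟨[], rfl, by simp, by simp⟩
  | succ n ih =>
    intro t hnt S hSX hS
    obtain ⟨hSt, hnotbelow⟩ := hS (by omega)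
    obtain ⟨A, hA, hcomp⟩ := (hsat t (by omega)).2.2 S hSX hSt
    have hSA : S ⊂ A := hcomp.resolve_left (hnotbelow A hA)
    obtain ⟨l, hlen, hl, hlF⟩ := ih (t + 1) (by omega) A ((hsat t (by omega)).1 A hA)
      fun ht => ⟨disjoint_left.mp (hdisj t (by omega) (t + 1) ht (by omega)) hA,
        fun B hB => hlay.not_ssubset (fun i hi => (hsat i hi).isAntichain) (by omega) ht hB hA⟩
    refine ⟨A :: l, by simpa, List.isChain_cons_cons.mpr ⟨hSA, hl⟩, ?_⟩
    simp only [List.mem_cons]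
    rintro C (rfl | hC)
    · exact mem_biUnion.mpr ⟨t, mem_range.mpr (by omega), hA⟩
    · exact hlF C hC

theorem IsLayered.hasChain_insert (hlay : IsLayered k 𝒜)
    (hsat : ∀ i < k, IsSatAntichain X (𝒜 i))
    (hdisj : ∀ i < k, ∀ j < k, i ≠ j → Disjoint (𝒜 i) (𝒜 j)) {S : Finset β} (hSX : S ⊆ X)
    (hS : S ∉ (range k).biUnion 𝒜) : HasChain (insert S ((range k).biUnion 𝒜)) (k + 1) := by
  -- `t` is the first layer with no member below `S`, or `k` if there is none.
  have hex : ∃ t, t = k ∨ ∀ B ∈ 𝒜 t, ¬ B ⊂ S := ⟨k, .inl rfl⟩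
  set t := Nat.find hex
  have htk : t ≤ k := Nat.find_min' hex (.inl rfl)
  have hbelow : ∀ j < t, ∃ B ∈ 𝒜 j, B ⊂ S := fun j hj => by
    simpa using (not_or.mp (Nat.find_min hex hj)).2
  have habove : t < k → S ∉ 𝒜 t ∧ ∀ B ∈ 𝒜 t, ¬ B ⊂ S := fun ht =>
    ⟨fun h => hS (mem_biUnion.mpr ⟨t, mem_range.mpr ht, h⟩),
      (Nat.find_spec hex).resolve_left ht.ne⟩
  obtain ⟨lo, hlo_len, hlo, hloF⟩ := hlay.exists_isChain_below t htk S hbelow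
  obtain ⟨hi, hhi_len, hhi, hhiF⟩ :=
    hlay.exists_isChain_above hsat hdisj (k - t) t (by omega) S hSX habove
  have hchain := hasChain_of_isChain (List.isChain_split.mpr ⟨hlo, hhi⟩)
    (ℱ := insert S ((range k).biUnion 𝒜)) (by
      simp only [List.mem_append, List.mem_cons]
      rintro C (hC | rfl | hC)
      · exact mem_insert_of_mem (hloF C hC)
      · exact mem_insert_self C _
      · exact mem_insert_of_mem (hhiF C hC))
  convert hchain using 1
  simp only [List.length_append, List.length_cons]
  omega

end LayeredAntichains

theorem stmt_5_general (X : Finset α) (k : ℕ) (𝒜 : ℕ → Finset (Finset α))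
    (hsat : ∀ i < k, IsSatAntichain X (𝒜 i))
    (hdisj : ∀ i < k, ∀ j < k, i ≠ j → Disjoint (𝒜 i) (𝒜 j))
    (hlay : ∀ i, 1 ≤ i → i < k → ∀ D ∈ 𝒜 i, ∃ D' ∈ 𝒜 (i - 1), D' ⊂ D) :
    IsSatSperner X ((Finset.range k).biUnion 𝒜) k := by
  have hanti := fun i hi => (hsat i hi).isAntichain
  refine ⟨fun A hA => ?_, IsLayered.not_hasChain_succ hlay hanti,
    fun S hSX hS => IsLayered.hasChain_insert hlay hsat hdisj hSX hS⟩
  obtain ⟨i, hi, hAi⟩ := mem_biUnion.mp hA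
  exact (hsat i (mem_range.mp hi)).1 A hAi

theorem stmt_5 (X : Finset α) (k : ℕ) (hk : 1 ≤ k) (𝒜 : ℕ → Finset (Finset α))
    (hsat : ∀ i < k, IsSatAntichain X (𝒜 i))
    (hdisj : ∀ i < k, ∀ j < k, i ≠ j → Disjoint (𝒜 i) (𝒜 j))
    (hlay : ∀ i, 1 ≤ i → i < k → ∀ D ∈ 𝒜 i, ∃ D' ∈ 𝒜 (i - 1), D' ⊂ D) :
    IsSatSperner X ((Finset.range k).biUnion 𝒜) k :=
  stmt_5_general X k 𝒜 hsat hdisj hlay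
end

section
/- Let F ⊆ P(X) be a saturated k-Sperner system with a homogeneous set H, and let (A_i)_{i=0}^{k-1} be its canonical decomposition into antichains (A_i is the set of minimal elements of F \ (A_0 ∪ ... ∪ A_{i-1})). Then each A_i is a saturated antichain. -/
/-! A chain of `k` members of `F` meets every layer `canonLayer F i` with `i < k`: if `t` members
of the chain lie below `C`, then `C` is in layer `t`, since a longer chain below `C` followed by
the members above `C` would be a chain of `k + 1` sets. So for `S ⊆ X` outside a layer it suffices
to find a `k`-chain in `F` whose members are all comparable with `S`. If `S ∉ F`, saturation gives
a `(k + 1)`-chain through `S`; drop `S`. If `S ∈ F`, toggling one point of the homogeneous set `H`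
in `S` gives `S' ∉ F`, and as every member of `F` meets `H` in `∅` or `H`, the members of `F`
comparable with `S'` are comparable with `S`. Then `S` can be added to the `k`-chain obtained
from `S'`, so maximality forces `S` to lie on it. -/

open Finset

variable {α : Type*} [DecidableEq α]

theorem hasChain_iff {𝒜 : Finset (Finset α)} {m : ℕ} :
    HasChain 𝒜 m ↔ ∃ 𝒞 ⊆ 𝒜, IsChain (· ≤ ·) (𝒞 : Set (Finset α)) ∧ #𝒞 = m := by
  constructor
  · rintro ⟨C, hC, hC𝒜⟩
    refine ⟨univ.image C, by simpa [subset_iff] using hC𝒜, ?_, ?_⟩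
    · simpa using hC.monotone.isChain_range
    · simp [card_image_of_injective _ hC.injective]
  · rintro ⟨𝒞, h𝒞𝒜, h𝒞, rfl⟩
    let := h𝒞.linearOrder
    let e : Fin #𝒞 ≃o (𝒞 : Set (Finset α)) := Fintype.orderIsoFinOfCardEq _ (by simp)
    exact ⟨fun i => (e i).1, fun i j hij => e.strictMono hij, fun i => h𝒞𝒜 (e i).2⟩

theorem IsChain.exists_card_filter_lt_eq {β : Type*} [PartialOrder β] [DecidableLT β]
    {𝒞 : Finset β} (h𝒞 : IsChain (· ≤ ·) (𝒞 : Set β)) {i : ℕ} (hi : i < #𝒞) :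
    ∃ C ∈ 𝒞, #{D ∈ 𝒞 | D < C} = i := by
  have hmono : ∀ C ∈ 𝒞, ∀ C' ∈ 𝒞, C < C' → #{D ∈ 𝒞 | D < C} < #{D ∈ 𝒞 | D < C'} := by
    intro C hC C' _ hCC'
    refine card_lt_card ((ssubset_iff_of_subset ?_).2 ⟨C, ?_, ?_⟩)
    · exact fun D hD => mem_filter.2 ⟨(mem_filter.1 hD).1, (mem_filter.1 hD).2.trans hCC'⟩
    · simpa [hC] using hCC'
    · simp
  have hinj : Set.InjOn (fun C => #{D ∈ 𝒞 | D < C}) 𝒞 := by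
    intro C hC C' hC' heq
    by_contra hne
    rcases h𝒞.total hC hC' with h | h
    · exact (hmono C hC C' hC' (lt_of_le_of_ne h hne)).ne heq
    · exact (hmono C' hC' C hC (lt_of_le_of_ne h (Ne.symm hne))).ne heq.symm
  have hmaps : Set.MapsTo (fun C => #{D ∈ 𝒞 | D < C}) 𝒞 (range #𝒞) := by
    intro C hC
    simpa using card_lt_card (filter_ssubset (p := (· < C)).2 ⟨C, hC, lt_irrefl C⟩)
  exact surjOn_of_injOn_of_card_le _ hmaps hinj (by simp) (mem_range.2 hi)

section CanonicalDecomposition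

variable {F : Finset (Finset α)} {B : Finset α}

theorem mem_canonRest_succ_iff {i : ℕ} :
    B ∈ canonRest F (i + 1) ↔ B ∈ canonRest F i ∧ ∃ A ∈ canonRest F i, A ⊂ B := by
  rw [canonRest, mem_sdiff, minimalSets, mem_filter]
  push Not
  tauto

theorem mem_canonLayer_iff {i : ℕ} :
    B ∈ canonLayer F i ↔ B ∈ canonRest F i ∧ B ∉ canonRest F (i + 1) := by
  rw [canonRest, mem_sdiff]
  constructor
  · exact fun hB => ⟨mem_of_mem_filter _ hB, fun h => h.2 hB⟩
  · exact fun ⟨hB, hB'⟩ => by_contra fun h => hB' ⟨hB, h⟩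

theorem mem_canonRest_iff {i : ℕ} :
    B ∈ canonRest F i ↔
      B ∈ F ∧ ∃ 𝒞 ⊆ {C ∈ F | C < B}, IsChain (· ≤ ·) (𝒞 : Set (Finset α)) ∧ #𝒞 = i := by
  induction i generalizing B with
  | zero => simp [canonRest]
  | succ i ih =>
    simp only [mem_canonRest_succ_iff, ih]
    constructor
    · rintro ⟨⟨hBF, -⟩, A, ⟨hAF, 𝒞, h𝒞A, h𝒞, rfl⟩, hAB⟩
      have h𝒞B : ∀ C ∈ 𝒞, C ∈ F ∧ C ⊂ A := fun C hC => mem_filter.1 (h𝒞A hC)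
      refine ⟨hBF, insert A 𝒞, ?_, ?_, ?_⟩
      · refine insert_subset (mem_filter.2 ⟨hAF, hAB⟩) fun C hC => ?_
        exact mem_filter.2 ⟨(h𝒞B C hC).1, (h𝒞B C hC).2.trans hAB⟩
      · rw [coe_insert]
        exact h𝒞.insert fun C hC _ => Or.inr (h𝒞B C hC).2.le
      · exact card_insert_of_notMem fun hA => (h𝒞B A hA).2.ne rfl
    · rintro ⟨hBF, 𝒞, h𝒞B, h𝒞, h𝒞card⟩
      obtain ⟨M, hM⟩ := 𝒞.exists_maximal (card_pos.1 (by omega))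
      have hMB := mem_filter.1 (h𝒞B hM.prop)
      have hbelow : 𝒞.erase M ⊆ {C ∈ F | C < M} := by
        intro C hC
        obtain ⟨hCM, hC𝒞⟩ := mem_erase.1 hC
        exact mem_filter.2 ⟨(mem_filter.1 (h𝒞B hC𝒞)).1,
          lt_of_le_of_ne (h𝒞.le_of_not_gt hM.prop hC𝒞 (hM.not_gt hC𝒞)) hCM⟩
      have hchain : IsChain (· ≤ ·) ((𝒞.erase M : Finset _) : Set (Finset α)) :=
        h𝒞.mono (coe_subset.2 (erase_subset _ _))
      have hcard : #(𝒞.erase M) = i := by rw [card_erase_of_mem hM.prop]; omega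
      exact ⟨⟨hBF, 𝒞.erase M, (erase_subset _ _).trans h𝒞B, hchain, hcard⟩,
        M, ⟨hMB.1, 𝒞.erase M, hbelow, hchain, hcard⟩, hMB.2⟩

theorem canonLayer_subset (i : ℕ) : canonLayer F i ⊆ F :=
  fun _ hB => (mem_canonRest_iff.1 (mem_canonLayer_iff.1 hB).1).1

end CanonicalDecomposition

theorem mem_canonLayer_of_isChain {F 𝒞 : Finset (Finset α)} {k : ℕ} (hF : ¬ HasChain F (k + 1))
    (h𝒞F : 𝒞 ⊆ F) (h𝒞 : IsChain (· ≤ ·) (𝒞 : Set (Finset α))) (hcard : #𝒞 = k)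
    {C : Finset α} (hC : C ∈ 𝒞) : C ∈ canonLayer F #{D ∈ 𝒞 | D < C} := by
  rw [mem_canonLayer_iff, mem_canonRest_iff, mem_canonRest_iff]
  refine ⟨⟨h𝒞F hC, _, filter_subset_filter _ h𝒞F, h𝒞.mono (coe_subset.2 (filter_subset _ _)), rfl⟩,
    ?_⟩
  rintro ⟨-, 𝒟, h𝒟C, h𝒟, h𝒟card⟩
  -- a longer chain below `C`, followed by the part of `𝒞` above `C`, has `k + 1` members
  have hbelow : ∀ D ∈ 𝒟, D ∈ F ∧ D < C := fun D hD => mem_filter.1 (h𝒟C hD)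
  have hsplit : #{D ∈ 𝒞 | C ≤ D} + #{D ∈ 𝒞 | D < C} = k := by
    rw [← hcard, ← card_filter_add_card_filter_not (s := 𝒞) (C ≤ ·)]
    congr 2
    exact filter_congr fun D hD => (h𝒞.not_le hC hD).symm
  refine hF (hasChain_iff.2 ⟨𝒟 ∪ {D ∈ 𝒞 | C ≤ D}, ?_, ?_, ?_⟩)
  · exact union_subset (fun D hD => (hbelow D hD).1) ((filter_subset _ _).trans h𝒞F)
  · rw [coe_union]
    refine isChain_union.2 ⟨h𝒟, h𝒞.mono (coe_subset.2 (filter_subset _ _)), fun D hD E hE _ => ?_⟩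
    left
    exact (hbelow D hD).2.le.trans (mem_filter.1 hE).2
  · rw [card_union_of_disjoint, h𝒟card]
    · omega
    · exact disjoint_left.2 fun D hD hD' => ((hbelow D hD).2.trans_le (mem_filter.1 hD').2).false

theorem exists_mem_canonLayer_of_isChain {F 𝒞 : Finset (Finset α)} {k : ℕ}
    (hF : ¬ HasChain F (k + 1)) (h𝒞F : 𝒞 ⊆ F) (h𝒞 : IsChain (· ≤ ·) (𝒞 : Set (Finset α)))
    (hcard : #𝒞 = k) {i : ℕ} (hi : i < k) : ∃ A ∈ 𝒞, A ∈ canonLayer F i := by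
  obtain ⟨A, hA, rfl⟩ := h𝒞.exists_card_filter_lt_eq (hcard ▸ hi)
  exact ⟨A, hA, mem_canonLayer_of_isChain hF h𝒞F h𝒞 hcard hA⟩

theorem AtomProp.exists_toggle {X H B : Finset α} {F : Finset (Finset α)} (hat : AtomProp F H)
    (hHX : H ⊆ X) (hH : 1 < #H) (hBX : B ⊆ X) (hB : B ∈ F) :
    ∃ S ⊆ X, S ∉ F ∧ (∀ D ∈ F, D ⊆ S → D ⊆ B) ∧ ∀ D ∈ F, S ⊆ D → B ⊆ D := by
  obtain ⟨h, hh, h', hh', hne⟩ := one_lt_card.1 hH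
  have hdisj : ∀ D, D ∩ H = ∅ → ∀ x ∈ H, x ∉ D := fun D hD _ hx =>
    disjoint_right.1 (disjoint_iff_inter_eq_empty.2 hD) hx
  rcases hat B hB with hBH | hHB
  · refine ⟨insert h B, insert_subset (hHX hh) hBX, fun hS => ?_, fun D hD hDS => ?_,
      fun D _ hSD => (subset_insert h B).trans hSD⟩
    · rcases hat _ hS with hSH | hHS
      · exact hdisj _ hSH h hh (mem_insert_self h B)
      · exact (mem_insert.1 (hHS hh')).elim (fun e => hne e.symm) (hdisj B hBH h' hh')
    · rcases hat D hD with hDH | hHD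
      · exact (subset_insert_iff_of_notMem (hdisj D hDH h hh)).1 hDS
      · exact ((mem_insert.1 (hDS (hHD hh'))).elim (fun e => hne e.symm)
          (hdisj B hBH h' hh')).elim
  · refine ⟨B.erase h, (erase_subset h B).trans hBX, fun hS => ?_,
      fun D _ hDS => hDS.trans (erase_subset h B), fun D hD hSD => ?_⟩
    · rcases hat _ hS with hSH | hHS
      · exact hdisj _ hSH h' hh' (mem_erase.2 ⟨Ne.symm hne, hHB hh'⟩)
      · exact notMem_erase h B (hHS hh)
    · rcases hat D hD with hDH | hHD
      · exact (hdisj D hDH h' hh' (hSD (mem_erase.2 ⟨Ne.symm hne, hHB hh'⟩))).elim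
      · rw [← insert_erase (hHB hh)]
        exact insert_subset (hHD hh) hSD

namespace IsSatSperner

variable {X : Finset α} {F : Finset (Finset α)} {k : ℕ} {S : Finset α}

theorem exists_isChain_of_notMem (hF : IsSatSperner X F k) (hSX : S ⊆ X) (hSF : S ∉ F) :
    ∃ 𝒞 ⊆ F, IsChain (· ≤ ·) (𝒞 : Set (Finset α)) ∧ #𝒞 = k ∧ ∀ C ∈ 𝒞, C ≤ S ∨ S ≤ C := by
  obtain ⟨𝒞, h𝒞F, h𝒞, hcard⟩ := hasChain_iff.1 (hF.2.2 S hSX hSF)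
  have hmem : ∀ C ∈ 𝒞, C ≠ S → C ∈ F := fun C hC hCS => (mem_insert.1 (h𝒞F hC)).resolve_left hCS
  have hS : S ∈ 𝒞 := by_contra fun hS => hF.2.1 <| hasChain_iff.2
    ⟨𝒞, fun C hC => hmem C hC (ne_of_mem_of_not_mem hC hS), h𝒞, hcard⟩
  refine ⟨𝒞.erase S, fun C hC => hmem C (mem_of_mem_erase hC) (ne_of_mem_erase hC),
    h𝒞.mono (coe_subset.2 (erase_subset _ _)), by rw [card_erase_of_mem hS, hcard]; rfl,
    fun C hC => h𝒞.total (mem_of_mem_erase hC) hS⟩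

theorem exists_isChain_of_mem {H B : Finset α} (hF : IsSatSperner X F k) (hat : AtomProp F H)
    (hHX : H ⊆ X) (hH : 1 < #H) (hB : B ∈ F) :
    ∃ 𝒞 ⊆ F, IsChain (· ≤ ·) (𝒞 : Set (Finset α)) ∧ #𝒞 = k ∧ B ∈ 𝒞 := by
  obtain ⟨S, hSX, hSF, hbelow, habove⟩ := hat.exists_toggle hHX hH (hF.1 B hB) hB
  obtain ⟨𝒞, h𝒞F, h𝒞, hcard, hS⟩ := hF.exists_isChain_of_notMem hSX hSF
  refine ⟨𝒞, h𝒞F, h𝒞, hcard, by_contra fun hB𝒞 => hF.2.1 <| hasChain_iff.2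
    ⟨insert B 𝒞, insert_subset hB h𝒞F, ?_, by rw [card_insert_of_notMem hB𝒞, hcard]⟩⟩
  rw [coe_insert]
  exact h𝒞.insert fun C hC _ =>
    ((hS C hC).imp (hbelow C (h𝒞F hC)) (habove C (h𝒞F hC))).symm

end IsSatSperner

theorem stmt_6 (X : Finset α) (F : Finset (Finset α)) (k : ℕ)
    (hF : IsSatSperner X F k) (H : Finset α) (hH : IsHomog X F H) :
    ∀ i < k, IsSatAntichain X (canonLayer F i) := by
  obtain ⟨hHX, hcard, hat, -⟩ := hH
  intro i hi
  refine ⟨fun A hA => hF.1 A (canonLayer_subset i hA),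
    fun A hA B hB => (mem_filter.1 hB).2 A (mem_of_mem_filter _ hA), fun S hSX hS => ?_⟩
  obtain ⟨𝒞, h𝒞F, h𝒞, h𝒞card, hcomp⟩ :
      ∃ 𝒞 ⊆ F, IsChain (· ≤ ·) (𝒞 : Set (Finset α)) ∧ #𝒞 = k ∧ ∀ C ∈ 𝒞, C ≤ S ∨ S ≤ C := by
    by_cases hSF : S ∈ F
    · obtain ⟨𝒞, h𝒞F, h𝒞, h𝒞card, hS⟩ := hF.exists_isChain_of_mem hat hHX hcard hSF
      exact ⟨𝒞, h𝒞F, h𝒞, h𝒞card, fun C hC => h𝒞.total hC hS⟩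
    · exact hF.exists_isChain_of_notMem hSX hSF
  obtain ⟨A, hA𝒞, hA⟩ := exists_mem_canonLayer_of_isChain hF.2.1 h𝒞F h𝒞 h𝒞card hi
  have hAS : A ≠ S := fun h => hS (h ▸ hA)
  exact ⟨A, hA, (hcomp A hA𝒞).imp (lt_of_le_of_ne · hAS) (lt_of_le_of_ne · hAS.symm)⟩
end

section
/- Let X₁ and X₂ be disjoint finite sets, and for i ∈ {1,2} let F_i ⊆ P(X_i) be a saturated k_i-Sperner system containing ∅ and X_i, with homogeneous set H_i ⊆ X_i, such that every member of F_i is either disjoint from H_i (small) or contains H_i (large). Define G := {A ∪ B : A ∈ F₁ small, B ∈ F₂ small} ∪ {S ∪ T : S ∈ F₁ large, T ∈ F₂ large} ⊆ P(X₁ ∪ X₂). Then G is a saturated (k₁ + k₂ - 2)-Sperner system containing ∅ and X₁ ∪ X₂, and H₁ ∪ H₂ is homogeneous for G. -/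
open Finset

variable {α : Type*} [DecidableEq α]

/-- The combined system of Lemma 11: small sets joined with small sets, large with large. -/
def combineSys (H₁ H₂ : Finset α) (F₁ F₂ : Finset (Finset α)) : Finset (Finset α) :=
  ((F₁.filter fun S => S ∩ H₁ = ∅) ×ˢ (F₂.filter fun S => S ∩ H₂ = ∅)).image
      (fun p => p.1 ∪ p.2) ∪
  ((F₁.filter fun S => H₁ ⊆ S) ×ˢ (F₂.filter fun S => H₂ ⊆ S)).image
      (fun p => p.1 ∪ p.2)

/-!
A chain in the combined system consists of small members followed by large ones. Projecting a
chain of subsets of `X₁ ∪ X₂` to `X₁` and to `X₂` gives two chains whose sizes add up to at least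
its length plus one. The small and the large part of a chain project to disjoint families, so a
chain of `m` members of the combined system, completed by `∅` and `X₁ ∪ X₂`, yields chains in `F₁`
and `F₂` of total size at least `m + 2`.

Conversely, let `S ∉ G` meet `X₁` in `A`. Saturation of `F₁` at the set that agrees with `A` off
`H₁` and contains all but one point of `H₁` gives small members below `A` and large members above
`A`, `k₁` of them in total; the same holds in `F₂`. Chains of sizes `a` in `P(X₁)` and `b` in
`P(X₂)` combine into a chain of `a + b - 1` unions, and these fit below and above `S`.
-/

omit [DecidableEq α] in
theorem HasChain.mono {𝒜 : Finset (Finset α)} {m n : ℕ} (h : HasChain 𝒜 m) (hnm : n ≤ m) :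
    HasChain 𝒜 n := by
  obtain ⟨C, hC, hC𝒜⟩ := h
  exact ⟨C ∘ Fin.castLE hnm, hC.comp (Fin.strictMono_castLE hnm), fun i => hC𝒜 _⟩

theorem HasChain.exists_isChain {𝒜 : Finset (Finset α)} {m : ℕ} (h : HasChain 𝒜 m) :
    ∃ 𝒞 ⊆ 𝒜, IsChain (· ⊆ ·) (𝒞 : Set (Finset α)) ∧ #𝒞 = m := by
  obtain ⟨C, hC, hC𝒜⟩ := h
  refine ⟨univ.image C, fun _ hA => ?_, ?_, ?_⟩
  · obtain ⟨i, -, rfl⟩ := mem_image.1 hA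
    exact hC𝒜 i
  · rw [coe_image, coe_univ, Set.image_univ]
    exact hC.monotone.isChain_range
  · rw [card_image_of_injective _ hC.injective, card_univ, Fintype.card_fin]

theorem hasChain_of_isChain_s7 {𝒜 𝒞 : Finset (Finset α)} {m : ℕ} (h𝒞𝒜 : 𝒞 ⊆ 𝒜)
    (h𝒞 : IsChain (· ⊆ ·) (𝒞 : Set (Finset α))) (hm : m ≤ #𝒞) : HasChain 𝒜 m := by
  let := IsChain.linearOrder (α := Finset α) h𝒞
  let e := monoEquivOfFin (𝒞 : Set (Finset α)) (k := #𝒞) (by simp)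
  exact HasChain.mono ⟨fun i => (e i).1, fun _ _ hij => e.strictMono hij, fun i => h𝒞𝒜 (e i).2⟩ hm

theorem card_le_of_not_hasChain {𝒜 𝒞 : Finset (Finset α)} {k : ℕ} (h : ¬HasChain 𝒜 (k + 1))
    (h𝒞𝒜 : 𝒞 ⊆ 𝒜) (h𝒞 : IsChain (· ⊆ ·) (𝒞 : Set (Finset α))) : #𝒞 ≤ k := by
  by_contra! hk
  exact h (hasChain_of_isChain_s7 h𝒞𝒜 h𝒞 hk)

theorem hasChain_insert_of_subset_of_superset {𝒜 𝒟 𝒰 : Finset (Finset α)} {S : Finset α}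
    (hS : S ∉ 𝒜) (h𝒟𝒜 : 𝒟 ⊆ 𝒜) (h𝒰𝒜 : 𝒰 ⊆ 𝒜) (h𝒟 : IsChain (· ⊆ ·) (𝒟 : Set (Finset α)))
    (h𝒰 : IsChain (· ⊆ ·) (𝒰 : Set (Finset α))) (h𝒟S : ∀ D ∈ 𝒟, D ⊆ S) (h𝒰S : ∀ U ∈ 𝒰, S ⊆ U) :
    HasChain (insert S 𝒜) (#𝒟 + #𝒰 + 1) := by
  have hdisj : Disjoint 𝒟 𝒰 := disjoint_left.2 fun D hD hD' =>
    hS ((h𝒟S D hD).antisymm (h𝒰S D hD') ▸ h𝒟𝒜 hD)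
  have hS𝒟𝒰 : S ∉ 𝒟 ∪ 𝒰 := fun h => hS (union_subset h𝒟𝒜 h𝒰𝒜 h)
  refine hasChain_of_isChain_s7 (insert_subset_insert S (union_subset h𝒟𝒜 h𝒰𝒜)) ?_
    (by rw [card_insert_of_notMem hS𝒟𝒰, card_union_of_disjoint hdisj])
  rw [coe_insert, coe_union]
  refine (isChain_union.2 ⟨h𝒟, h𝒰, fun D hD U hU _ => Or.inl ((h𝒟S D hD).trans (h𝒰S U hU))⟩).insert
    fun T hT _ => ?_
  rcases hT with hT | hT
  · exact Or.inr (h𝒟S T hT)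
  · exact Or.inl (h𝒰S T hT)

omit [DecidableEq α] in
theorem IsChain.subset_of_card_le {𝒞 : Finset (Finset α)} {C D : Finset α}
    (h𝒞 : IsChain (· ⊆ ·) (𝒞 : Set (Finset α))) (hC : C ∈ 𝒞) (hD : D ∈ 𝒞) (hDC : #D ≤ #C) :
    D ⊆ C := by
  rcases h𝒞.total hD hC with h | h
  · exact h
  · exact (eq_of_subset_of_card_le h hDC).ge

theorem union_inter_of_subset_of_disjoint {S T X : Finset α} (hS : S ⊆ X) (hT : Disjoint T X) :
    (S ∪ T) ∩ X = S := by
  rw [union_inter_distrib_right, inter_eq_left.2 hS, disjoint_iff_inter_eq_empty.1 hT, union_empty]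

theorem IsChain.image_of_monotone {𝒞 : Finset (Finset α)}
    (h𝒞 : IsChain (· ⊆ ·) (𝒞 : Set (Finset α))) {f : Finset α → Finset α} (hf : Monotone f) :
    IsChain (· ⊆ ·) ((𝒞.image f : Finset (Finset α)) : Set (Finset α)) := by
  rw [coe_image]
  exact hf.isChain_image h𝒞

theorem card_add_one_le_card_image_inter_add {𝒞 : Finset (Finset α)} {X₁ X₂ : Finset α}
    (h𝒞 : IsChain (· ⊆ ·) (𝒞 : Set (Finset α))) (hne : 𝒞.Nonempty) (hX : ∀ C ∈ 𝒞, C ⊆ X₁ ∪ X₂) :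
    #𝒞 + 1 ≤ #(𝒞.image (· ∩ X₁)) + #(𝒞.image (· ∩ X₂)) := by
  induction 𝒞 using Finset.induction_on_max_value (fun C : Finset α => #C) with
  | empty => simp at hne
  | insert C 𝒟 hC𝒟 hmax ih =>
    rcases 𝒟.eq_empty_or_nonempty with rfl | h𝒟
    · simp
    have h𝒟chain : IsChain (· ⊆ ·) (𝒟 : Set (Finset α)) :=
      h𝒞.mono (by rw [coe_insert]; exact Set.subset_insert _ _)
    have ih := ih h𝒟chain h𝒟 fun D hD => hX D (mem_insert_of_mem hD)
    -- `C` is the largest member, so it cannot agree with earlier members on both halves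
    have hnew : C ∩ X₁ ∉ 𝒟.image (· ∩ X₁) ∨ C ∩ X₂ ∉ 𝒟.image (· ∩ X₂) := by
      by_contra! h
      obtain ⟨⟨D₁, hD₁, h₁⟩, ⟨D₂, hD₂, h₂⟩⟩ := And.imp mem_image.1 mem_image.1 h
      obtain ⟨D, hD, hD₁D, hD₂D⟩ := h𝒟chain.directedOn D₁ hD₁ D₂ hD₂
      have hCD : C ⊆ D := by
        intro x hx
        rcases mem_union.1 (hX C (mem_insert_self C 𝒟) hx) with hx' | hx'
        · exact hD₁D (mem_inter.1 (h₁ ▸ mem_inter.2 ⟨hx, hx'⟩ : x ∈ D₁ ∩ X₁)).1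
        · exact hD₂D (mem_inter.1 (h₂ ▸ mem_inter.2 ⟨hx, hx'⟩ : x ∈ D₂ ∩ X₂)).1
      have hDC : D ⊆ C :=
        h𝒞.subset_of_card_le (mem_insert_self C 𝒟) (mem_insert_of_mem hD) (hmax D hD)
      exact hC𝒟 (hCD.antisymm hDC ▸ hD)
    have h₁ := card_le_card (subset_insert (C ∩ X₁) (𝒟.image (· ∩ X₁)))
    have h₂ := card_le_card (subset_insert (C ∩ X₂) (𝒟.image (· ∩ X₂)))
    rw [image_insert, image_insert, card_insert_of_notMem hC𝒟]
    rcases hnew with h | h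
    · rw [card_insert_of_notMem h]; omega
    · rw [card_insert_of_notMem h]; omega

theorem card_add_two_le_card_image_inter_add {𝒞 : Finset (Finset α)} {X₁ X₂ H : Finset α}
    (h𝒞 : IsChain (· ⊆ ·) (𝒞 : Set (Finset α))) (hX : ∀ C ∈ 𝒞, C ⊆ X₁ ∪ X₂)
    (hH : AtomProp 𝒞 H) (hH₁ : (H ∩ X₁).Nonempty) (hH₂ : (H ∩ X₂).Nonempty)
    (hsmall : ∃ S ∈ 𝒞, S ∩ H = ∅) (hlarge : ∃ L ∈ 𝒞, H ⊆ L) :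
    #𝒞 + 2 ≤ #(𝒞.image (· ∩ X₁)) + #(𝒞.image (· ∩ X₂)) := by
  set 𝒮 := 𝒞.filter (· ∩ H = ∅)
  set ℒ := 𝒞.filter (¬ · ∩ H = ∅)
  have hℒH : ∀ L ∈ ℒ, H ⊆ L := fun L hL =>
    (hH L (mem_filter.1 hL).1).resolve_left (mem_filter.1 hL).2
  have hsplit : ∀ Y, (H ∩ Y).Nonempty →
      #(𝒞.image (· ∩ Y)) = #(𝒮.image (· ∩ Y)) + #(ℒ.image (· ∩ Y)) := by
    rintro Y ⟨x, hx⟩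
    rw [← card_union_of_disjoint, ← image_union, filter_union_filter_not_eq]
    refine disjoint_left.2 fun _ hS' hL' => ?_
    obtain ⟨S, hS, rfl⟩ := mem_image.1 hS'
    obtain ⟨L, hL, hLS⟩ := mem_image.1 hL'
    have hxL : x ∈ L ∩ Y := mem_inter.2 ⟨hℒH L hL (mem_inter.1 hx).1, (mem_inter.1 hx).2⟩
    rw [hLS] at hxL
    have hxS : x ∈ S ∩ H := mem_inter.2 ⟨(mem_inter.1 hxL).1, (mem_inter.1 hx).1⟩
    rw [(mem_filter.1 hS).2] at hxS
    exact notMem_empty x hxS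
  obtain ⟨S, hS𝒞, hS⟩ := hsmall
  obtain ⟨L, hL𝒞, hL⟩ := hlarge
  have hL' : ¬L ∩ H = ∅ := by
    rw [inter_eq_right.2 hL]
    exact (hH₁.mono inter_subset_left).ne_empty
  have h𝒮 : #𝒮 + 1 ≤ #(𝒮.image (· ∩ X₁)) + #(𝒮.image (· ∩ X₂)) :=
    card_add_one_le_card_image_inter_add (h𝒞.mono (coe_subset.2 (filter_subset _ 𝒞)))
      ⟨S, mem_filter.2 ⟨hS𝒞, hS⟩⟩ fun C hC => hX C (filter_subset _ 𝒞 hC)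
  have hℒ : #ℒ + 1 ≤ #(ℒ.image (· ∩ X₁)) + #(ℒ.image (· ∩ X₂)) :=
    card_add_one_le_card_image_inter_add (h𝒞.mono (coe_subset.2 (filter_subset _ 𝒞)))
      ⟨L, mem_filter.2 ⟨hL𝒞, hL'⟩⟩ fun C hC => hX C (filter_subset _ 𝒞 hC)
  have h𝒮ℒ : #𝒮 + #ℒ = #𝒞 := card_filter_add_card_filter_not _
  rw [hsplit X₁ hH₁, hsplit X₂ hH₂]
  omega

theorem exists_isChain_subset_image₂_union {𝒟 𝒰 : Finset (Finset α)} {X₁ X₂ : Finset α}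
    (hX : Disjoint X₁ X₂) (h𝒟 : IsChain (· ⊆ ·) (𝒟 : Set (Finset α)))
    (h𝒰 : IsChain (· ⊆ ·) (𝒰 : Set (Finset α))) (h𝒟ne : 𝒟.Nonempty) (h𝒰ne : 𝒰.Nonempty)
    (h𝒟X : ∀ D ∈ 𝒟, D ⊆ X₁) (h𝒰X : ∀ U ∈ 𝒰, U ⊆ X₂) :
    ∃ 𝒞 ⊆ image₂ (· ∪ ·) 𝒟 𝒰, IsChain (· ⊆ ·) (𝒞 : Set (Finset α)) ∧ #𝒟 + #𝒰 ≤ #𝒞 + 1 := by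
  obtain ⟨D₁, hD₁, hD₁max⟩ := exists_max_image 𝒟 card h𝒟ne
  obtain ⟨U₀, hU₀, hU₀min⟩ := exists_min_image 𝒰 card h𝒰ne
  have hD₁top : ∀ D ∈ 𝒟, D ⊆ D₁ := fun D hD => h𝒟.subset_of_card_le hD₁ hD (hD₁max D hD)
  have hU₀bot : ∀ U ∈ 𝒰, U₀ ⊆ U := fun U hU => h𝒰.subset_of_card_le hU hU₀ (hU₀min U hU)
  have hinter₁ : ∀ D ∈ 𝒟, ∀ U ∈ 𝒰, (D ∪ U) ∩ X₁ = D := fun D hD U hU =>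
    union_inter_of_subset_of_disjoint (h𝒟X D hD) (hX.symm.mono_left (h𝒰X U hU))
  have hinter₂ : ∀ D ∈ 𝒟, ∀ U ∈ 𝒰, (D ∪ U) ∩ X₂ = U := fun D hD U hU => by
    rw [union_comm]
    exact union_inter_of_subset_of_disjoint (h𝒰X U hU) (hX.mono_left (h𝒟X D hD))
  set 𝒜 := 𝒟.image (· ∪ U₀)
  set ℬ := 𝒰.image (D₁ ∪ ·)
  have h𝒜 : #𝒜 = #𝒟 := card_image_of_injOn fun D hD D' hD' h => by
    rw [← hinter₁ D hD U₀ hU₀, ← hinter₁ D' hD' U₀ hU₀]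
    exact congrArg (· ∩ X₁) h
  have hℬ : #ℬ = #𝒰 := card_image_of_injOn fun U hU U' hU' h => by
    rw [← hinter₂ D₁ hD₁ U hU, ← hinter₂ D₁ hD₁ U' hU']
    exact congrArg (· ∩ X₂) h
  have h𝒜ℬ : #(𝒜 ∩ ℬ) ≤ 1 := by
    suffices ∀ C ∈ 𝒜 ∩ ℬ, C = D₁ ∪ U₀ from
      card_le_one.2 fun C hC C' hC' => (this C hC).trans (this C' hC').symm
    intro C hC
    obtain ⟨⟨D, hD, rfl⟩, ⟨U, hU, hDU⟩⟩ := And.imp mem_image.1 mem_image.1 (mem_inter.1 hC)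
    rw [← hinter₁ D hD U₀ hU₀, ← hDU, hinter₁ D₁ hD₁ U hU]
  refine ⟨𝒜 ∪ ℬ, fun C hC => ?_, ?_, ?_⟩
  · rcases mem_union.1 hC with hC | hC
    · obtain ⟨D, hD, rfl⟩ := mem_image.1 hC
      exact mem_image₂_of_mem hD hU₀
    · obtain ⟨U, hU, rfl⟩ := mem_image.1 hC
      exact mem_image₂_of_mem hD₁ hU
  · rw [coe_union, isChain_union]
    refine ⟨h𝒟.image_of_monotone fun _ _ h => union_subset_union_left h,
      h𝒰.image_of_monotone fun _ _ h => union_subset_union_right h, fun _ hA _ hB _ => Or.inl ?_⟩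
    obtain ⟨D, hD, rfl⟩ := mem_image.1 hA
    obtain ⟨U, hU, rfl⟩ := mem_image.1 hB
    exact union_subset_union (hD₁top D hD) (hU₀bot U hU)
  · have := card_union_add_card_inter 𝒜 ℬ
    omega

theorem IsSatSperner.exists_chains_below_above {X S : Finset α} {F : Finset (Finset α)} {k : ℕ}
    (hF : IsSatSperner X F k) (hSX : S ⊆ X) (hSF : S ∉ F) :
    ∃ 𝒟 ⊆ F, ∃ 𝒰 ⊆ F, IsChain (· ⊆ ·) (𝒟 : Set (Finset α)) ∧
      IsChain (· ⊆ ·) (𝒰 : Set (Finset α)) ∧ (∀ D ∈ 𝒟, D ⊂ S) ∧ (∀ U ∈ 𝒰, S ⊂ U) ∧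
      k ≤ #𝒟 + #𝒰 := by
  obtain ⟨𝒞, h𝒞F, h𝒞, h𝒞card⟩ := (hF.2.2 S hSX hSF).exists_isChain
  have hS𝒞 : S ∈ 𝒞 := by
    by_contra hS
    have h𝒞F' : 𝒞 ⊆ F := fun C hC =>
      (mem_insert.1 (h𝒞F hC)).resolve_left fun h => hS (h ▸ hC)
    have := card_le_of_not_hasChain hF.2.1 h𝒞F' h𝒞
    omega
  have h𝒞' : ∀ C ∈ 𝒞.erase S, C ∈ F ∧ C ≠ S ∧ (C ⊆ S ∨ S ⊆ C) := fun C hC => by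
    obtain ⟨hCS, hC𝒞⟩ := mem_erase.1 hC
    exact ⟨(mem_insert.1 (h𝒞F hC𝒞)).resolve_left hCS, hCS, h𝒞.total hC𝒞 hS𝒞⟩
  have hchain : ∀ ℬ ⊆ 𝒞.erase S, IsChain (· ⊆ ·) (ℬ : Set (Finset α)) := fun ℬ hℬ =>
    h𝒞.mono (coe_subset.2 (hℬ.trans (erase_subset S 𝒞)))
  refine ⟨(𝒞.erase S).filter (· ⊆ S), fun C hC => (h𝒞' C (mem_filter.1 hC).1).1,
    (𝒞.erase S).filter (¬ · ⊆ S), fun C hC => (h𝒞' C (mem_filter.1 hC).1).1,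
    hchain _ (filter_subset _ _), hchain _ (filter_subset _ _), fun C hC => ?_, fun C hC => ?_, ?_⟩
  · obtain ⟨hC, hCS⟩ := mem_filter.1 hC
    exact hCS.ssubset_of_ne (h𝒞' C hC).2.1
  · obtain ⟨hC, hCS⟩ := mem_filter.1 hC
    exact ((h𝒞' C hC).2.2.resolve_left hCS).ssubset_of_ne (h𝒞' C hC).2.1.symm
  · rw [card_filter_add_card_filter_not, card_erase_of_mem hS𝒞, h𝒞card]
    omega

theorem IsSatSperner.exists_small_large_chains {X H A : Finset α} {F : Finset (Finset α)} {k : ℕ}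
    (hF : IsSatSperner X F k) (hemptyF : ∅ ∈ F) (hXF : X ∈ F) (hHX : H ⊆ X) (hH : 2 ≤ #H)
    (hFH : AtomProp F H) (hA : A ⊆ X) :
    ∃ 𝒮 ⊆ F, ∃ ℒ ⊆ F, IsChain (· ⊆ ·) (𝒮 : Set (Finset α)) ∧
      IsChain (· ⊆ ·) (ℒ : Set (Finset α)) ∧ 𝒮.Nonempty ∧ ℒ.Nonempty ∧
      (∀ S ∈ 𝒮, S ∩ H = ∅ ∧ S ⊆ A) ∧ (∀ L ∈ ℒ, H ⊆ L ∧ A ⊆ L) ∧ k ≤ #𝒮 + #ℒ := by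
  obtain ⟨h, hh, h', hh', hhh'⟩ := one_lt_card.1 hH
  -- `Z` agrees with `A` off `H` and misses exactly one point of `H`: it is neither small nor large
  set Z := (A \ H) ∪ H.erase h
  have hhZ : h ∉ Z := by simp [Z, hh]
  have hh'Z : h' ∈ Z := mem_union_right _ (mem_erase.2 ⟨hhh'.symm, hh'⟩)
  have hZF : Z ∉ F := fun hZ => (hFH Z hZ).elim
    (fun h0 => notMem_empty h' (h0 ▸ mem_inter.2 ⟨hh'Z, hh'⟩)) (fun hHZ => hhZ (hHZ hh))
  have hZX : Z ⊆ X := union_subset (sdiff_subset.trans hA) ((erase_subset h H).trans hHX)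
  obtain ⟨𝒟, h𝒟F, 𝒰, h𝒰F, h𝒟, h𝒰, h𝒟Z, h𝒰Z, hk⟩ := hF.exists_chains_below_above hZX hZF
  have hsmall : ∀ D ∈ 𝒟, D ∩ H = ∅ ∧ D ⊆ A := fun D hD => by
    have hDH : D ∩ H = ∅ := (hFH D (h𝒟F hD)).resolve_right fun hHD =>
      hhZ ((h𝒟Z D hD).subset (hHD hh))
    refine ⟨hDH, fun x hx => ?_⟩
    rcases mem_union.1 ((h𝒟Z D hD).subset hx) with hx' | hx'
    · exact (mem_sdiff.1 hx').1
    · exact absurd (hDH ▸ mem_inter.2 ⟨hx, (erase_subset h H) hx'⟩) (notMem_empty x)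
  have hlarge : ∀ U ∈ 𝒰, H ⊆ U ∧ A ⊆ U := fun U hU => by
    have hHU : H ⊆ U := (hFH U (h𝒰F hU)).resolve_left fun h0 =>
      notMem_empty h' (h0 ▸ mem_inter.2 ⟨(h𝒰Z U hU).subset hh'Z, hh'⟩)
    refine ⟨hHU, fun x hx => ?_⟩
    by_cases hxH : x ∈ H
    · exact hHU hxH
    · exact (h𝒰Z U hU).subset (mem_union_left _ (mem_sdiff.2 ⟨hx, hxH⟩))
  refine ⟨insert ∅ 𝒟, insert_subset hemptyF h𝒟F, insert X 𝒰, insert_subset hXF h𝒰F, ?_, ?_,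
    insert_nonempty _ _, insert_nonempty _ _, ?_, ?_, ?_⟩
  · rw [coe_insert]
    exact h𝒟.insert fun _ _ _ => Or.inl (empty_subset _)
  · rw [coe_insert]
    exact h𝒰.insert fun U hU _ => Or.inr (hF.1 U (h𝒰F hU))
  · simpa [or_imp, forall_and] using hsmall
  · simpa [or_imp, forall_and, hHX, hA] using hlarge
  · have := card_le_card (subset_insert ∅ 𝒟)
    have := card_le_card (subset_insert X 𝒰)
    omega

theorem AtomProp.inter_of_forall_exists {F G : Finset (Finset α)} {X Y H : Finset α}
    (hXY : Disjoint X Y) (hFG : ∀ S ∈ F, ∃ T ∈ G, S ⊆ T ∧ T ⊆ S ∪ Y) (hGH : AtomProp G H) :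
    AtomProp F (H ∩ X) := by
  intro S hS
  obtain ⟨T, hTG, hST, hTS⟩ := hFG S hS
  refine (hGH T hTG).imp (fun hTH => ?_) (fun hHT x hx => ?_)
  · exact subset_empty.1 (hTH ▸ inter_subset_inter hST inter_subset_left)
  · obtain ⟨hxH, hxX⟩ := mem_inter.1 hx
    exact (mem_union.1 (hTS (hHT hxH))).resolve_right (disjoint_left.1 hXY hxX)

section CombineSys

variable {X₁ X₂ H₁ H₂ : Finset α} {F₁ F₂ : Finset (Finset α)}

theorem mem_combineSys {C : Finset α} :
    C ∈ combineSys H₁ H₂ F₁ F₂ ↔ ∃ S ∈ F₁, ∃ T ∈ F₂,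
      ((S ∩ H₁ = ∅ ∧ T ∩ H₂ = ∅) ∨ (H₁ ⊆ S ∧ H₂ ⊆ T)) ∧ S ∪ T = C := by
  simp only [combineSys, mem_union, mem_image, mem_product, mem_filter, Prod.exists]
  aesop

theorem combineSys_comm : combineSys H₁ H₂ F₁ F₂ = combineSys H₂ H₁ F₂ F₁ := by
  ext C
  simp only [mem_combineSys]
  constructor <;> rintro ⟨S, hS, T, hT, hST, rfl⟩ <;> exact ⟨T, hT, S, hS, by tauto, union_comm _ _⟩

theorem union_mem_combineSys_of_small {S T : Finset α} (hS : S ∈ F₁) (hT : T ∈ F₂)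
    (hSH : S ∩ H₁ = ∅) (hTH : T ∩ H₂ = ∅) : S ∪ T ∈ combineSys H₁ H₂ F₁ F₂ :=
  mem_combineSys.2 ⟨S, hS, T, hT, Or.inl ⟨hSH, hTH⟩, rfl⟩

theorem union_mem_combineSys_of_large {S T : Finset α} (hS : S ∈ F₁) (hT : T ∈ F₂)
    (hSH : H₁ ⊆ S) (hTH : H₂ ⊆ T) : S ∪ T ∈ combineSys H₁ H₂ F₁ F₂ :=
  mem_combineSys.2 ⟨S, hS, T, hT, Or.inr ⟨hSH, hTH⟩, rfl⟩

theorem empty_mem_combineSys (hemptyF₁ : ∅ ∈ F₁) (hemptyF₂ : ∅ ∈ F₂) :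
    ∅ ∈ combineSys H₁ H₂ F₁ F₂ :=
  union_empty (∅ : Finset α) ▸
    union_mem_combineSys_of_small hemptyF₁ hemptyF₂ (empty_inter H₁) (empty_inter H₂)

theorem subset_union_of_mem_combineSys (hF₁ : ∀ S ∈ F₁, S ⊆ X₁) (hF₂ : ∀ T ∈ F₂, T ⊆ X₂)
    {C : Finset α} (hC : C ∈ combineSys H₁ H₂ F₁ F₂) : C ⊆ X₁ ∪ X₂ := by
  obtain ⟨S, hS, T, hT, -, rfl⟩ := mem_combineSys.1 hC
  exact union_subset_union (hF₁ S hS) (hF₂ T hT)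

theorem inter_mem_of_mem_combineSys (hX : Disjoint X₁ X₂) (hF₁ : ∀ S ∈ F₁, S ⊆ X₁)
    (hF₂ : ∀ T ∈ F₂, T ⊆ X₂) {C : Finset α} (hC : C ∈ combineSys H₁ H₂ F₁ F₂) : C ∩ X₁ ∈ F₁ := by
  obtain ⟨S, hS, T, hT, -, rfl⟩ := mem_combineSys.1 hC
  rwa [union_inter_of_subset_of_disjoint (hF₁ S hS) (hX.symm.mono_left (hF₂ T hT))]

theorem atomProp_combineSys (hX : Disjoint X₁ X₂) (hF₁ : ∀ S ∈ F₁, S ⊆ X₁)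
    (hF₂ : ∀ T ∈ F₂, T ⊆ X₂) (hH₁X : H₁ ⊆ X₁) (hH₂X : H₂ ⊆ X₂) :
    AtomProp (combineSys H₁ H₂ F₁ F₂) (H₁ ∪ H₂) := by
  intro C hC
  obtain ⟨S, hS, T, hT, hST | hST, rfl⟩ := mem_combineSys.1 hC
  · left
    simp only [← disjoint_iff_inter_eq_empty, disjoint_union_left, disjoint_union_right] at hST ⊢
    exact ⟨⟨hST.1, hX.symm.mono (hF₂ T hT) hH₁X⟩, ⟨hX.mono (hF₁ S hS) hH₂X, hST.2⟩⟩
  · exact Or.inr (union_subset_union hST.1 hST.2)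

theorem exists_mem_combineSys_between (hemptyF₂ : ∅ ∈ F₂) (hXF₂ : X₂ ∈ F₂) (hH₂X : H₂ ⊆ X₂)
    (hF₁H₁ : AtomProp F₁ H₁) :
    ∀ S ∈ F₁, ∃ T ∈ combineSys H₁ H₂ F₁ F₂, S ⊆ T ∧ T ⊆ S ∪ X₂ := by
  intro S hS
  rcases hF₁H₁ S hS with hSH | hSH
  · exact ⟨S ∪ ∅, union_mem_combineSys_of_small hS hemptyF₂ hSH (empty_inter H₂),
      subset_union_left, union_subset_union_right (empty_subset X₂)⟩
  · exact ⟨S ∪ X₂, union_mem_combineSys_of_large hS hXF₂ hSH hH₂X, subset_union_left, subset_rfl⟩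

theorem not_hasChain_combineSys {k₁ k₂ : ℕ} (hX : Disjoint X₁ X₂) (hF₁ : ∀ S ∈ F₁, S ⊆ X₁)
    (hF₂ : ∀ T ∈ F₂, T ⊆ X₂) (hk₁ : ¬HasChain F₁ (k₁ + 1)) (hk₂ : ¬HasChain F₂ (k₂ + 1))
    (hemptyF₁ : ∅ ∈ F₁) (hemptyF₂ : ∅ ∈ F₂) (hXF₁ : X₁ ∈ F₁) (hXF₂ : X₂ ∈ F₂)
    (hH₁X : H₁ ⊆ X₁) (hH₂X : H₂ ⊆ X₂) (hH₁ : H₁.Nonempty) (hH₂ : H₂.Nonempty) :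
    ¬HasChain (combineSys H₁ H₂ F₁ F₂) (k₁ + k₂ - 2 + 1) := by
  intro hG
  obtain ⟨𝒞, h𝒞G, h𝒞, h𝒞card⟩ := hG.exists_isChain
  have hGX : ∀ C ∈ combineSys H₁ H₂ F₁ F₂, C ⊆ X₁ ∪ X₂ := fun C hC =>
    subset_union_of_mem_combineSys hF₁ hF₂ hC
  -- complete the chain by a small bottom and a large top, so that both kinds occur
  set 𝒟 := insert ∅ (insert (X₁ ∪ X₂) 𝒞)
  have h𝒟G : 𝒟 ⊆ combineSys H₁ H₂ F₁ F₂ :=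
    insert_subset (empty_mem_combineSys hemptyF₁ hemptyF₂)
      (insert_subset (union_mem_combineSys_of_large hXF₁ hXF₂ hH₁X hH₂X) h𝒞G)
  have h𝒟 : IsChain (· ⊆ ·) (𝒟 : Set (Finset α)) := by
    rw [coe_insert, coe_insert]
    exact (h𝒞.insert fun C hC _ => Or.inr (hGX C (h𝒞G hC))).insert
      fun _ _ _ => Or.inl (empty_subset _)
  have hcard := card_add_two_le_card_image_inter_add h𝒟 (fun C hC => hGX C (h𝒟G hC))
    (fun C hC => atomProp_combineSys hX hF₁ hF₂ hH₁X hH₂X C (h𝒟G hC))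
    (hH₁.mono (subset_inter subset_union_left hH₁X))
    (hH₂.mono (subset_inter subset_union_right hH₂X))
    ⟨∅, mem_insert_self _ _, empty_inter _⟩
    ⟨X₁ ∪ X₂, mem_insert_of_mem (mem_insert_self _ _), union_subset_union hH₁X hH₂X⟩
  have h₁ : #(𝒟.image (· ∩ X₁)) ≤ k₁ := card_le_of_not_hasChain hk₁
    (fun _ hC' => by
      obtain ⟨C, hC, rfl⟩ := mem_image.1 hC'
      exact inter_mem_of_mem_combineSys hX hF₁ hF₂ (h𝒟G hC))
    (h𝒟.image_of_monotone fun _ _ h => inter_subset_inter_right h)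
  have h₂ : #(𝒟.image (· ∩ X₂)) ≤ k₂ := card_le_of_not_hasChain hk₂
    (fun _ hC' => by
      obtain ⟨C, hC, rfl⟩ := mem_image.1 hC'
      rw [combineSys_comm] at h𝒟G
      exact inter_mem_of_mem_combineSys hX.symm hF₂ hF₁ (h𝒟G hC))
    (h𝒟.image_of_monotone fun _ _ h => inter_subset_inter_right h)
  have h𝒞𝒟 : #𝒞 ≤ #𝒟 :=
    card_le_card ((subset_insert _ 𝒞).trans (subset_insert _ _))
  omega

theorem hasChain_insert_combineSys {k₁ k₂ : ℕ} (hX : Disjoint X₁ X₂)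
    (h₁ : IsSatSperner X₁ F₁ k₁) (h₂ : IsSatSperner X₂ F₂ k₂)
    (hemptyF₁ : ∅ ∈ F₁) (hemptyF₂ : ∅ ∈ F₂) (hXF₁ : X₁ ∈ F₁) (hXF₂ : X₂ ∈ F₂)
    (hH₁X : H₁ ⊆ X₁) (hH₂X : H₂ ⊆ X₂) (hH₁ : 2 ≤ #H₁) (hH₂ : 2 ≤ #H₂)
    (hF₁H₁ : AtomProp F₁ H₁) (hF₂H₂ : AtomProp F₂ H₂) {S : Finset α} (hSX : S ⊆ X₁ ∪ X₂)
    (hSG : S ∉ combineSys H₁ H₂ F₁ F₂) :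
    HasChain (insert S (combineSys H₁ H₂ F₁ F₂)) (k₁ + k₂ - 2 + 1) := by
  obtain ⟨𝒮₁, h𝒮₁F, ℒ₁, hℒ₁F, h𝒮₁, hℒ₁, h𝒮₁ne, hℒ₁ne, h𝒮₁S, hℒ₁S, hk₁⟩ :=
    h₁.exists_small_large_chains hemptyF₁ hXF₁ hH₁X hH₁ hF₁H₁ (inter_subset_right (s₁ := S))
  obtain ⟨𝒮₂, h𝒮₂F, ℒ₂, hℒ₂F, h𝒮₂, hℒ₂, h𝒮₂ne, hℒ₂ne, h𝒮₂S, hℒ₂S, hk₂⟩ :=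
    h₂.exists_small_large_chains hemptyF₂ hXF₂ hH₂X hH₂ hF₂H₂ (inter_subset_right (s₁ := S))
  obtain ⟨𝒟, h𝒟sub, h𝒟, h𝒟card⟩ := exists_isChain_subset_image₂_union hX h𝒮₁ h𝒮₂ h𝒮₁ne h𝒮₂ne
    (fun A hA => (h𝒮₁S A hA).2.trans inter_subset_right)
    (fun B hB => (h𝒮₂S B hB).2.trans inter_subset_right)
  obtain ⟨𝒰, h𝒰sub, h𝒰, h𝒰card⟩ := exists_isChain_subset_image₂_union hX hℒ₁ hℒ₂ hℒ₁ne hℒ₂ne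
    (fun A hA => h₁.1 A (hℒ₁F hA)) (fun B hB => h₂.1 B (hℒ₂F hB))
  have hS : S ∩ X₁ ∪ S ∩ X₂ = S := by rw [← inter_union_distrib_left, inter_eq_left.2 hSX]
  have h𝒟S : ∀ D ∈ 𝒟, D ∈ combineSys H₁ H₂ F₁ F₂ ∧ D ⊆ S := fun D hD => by
    obtain ⟨A, hA, B, hB, rfl⟩ := mem_image₂.1 (h𝒟sub hD)
    exact ⟨union_mem_combineSys_of_small (h𝒮₁F hA) (h𝒮₂F hB) (h𝒮₁S A hA).1 (h𝒮₂S B hB).1,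
      hS ▸ union_subset_union (h𝒮₁S A hA).2 (h𝒮₂S B hB).2⟩
  have h𝒰S : ∀ U ∈ 𝒰, U ∈ combineSys H₁ H₂ F₁ F₂ ∧ S ⊆ U := fun U hU => by
    obtain ⟨A, hA, B, hB, rfl⟩ := mem_image₂.1 (h𝒰sub hU)
    exact ⟨union_mem_combineSys_of_large (hℒ₁F hA) (hℒ₂F hB) (hℒ₁S A hA).1 (hℒ₂S B hB).1,
      hS ▸ union_subset_union (hℒ₁S A hA).2 (hℒ₂S B hB).2⟩
  exact (hasChain_insert_of_subset_of_superset hSG (fun D hD => (h𝒟S D hD).1)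
    (fun U hU => (h𝒰S U hU).1) h𝒟 h𝒰 (fun D hD => (h𝒟S D hD).2)
    (fun U hU => (h𝒰S U hU).2)).mono (by omega)

theorem isHomog_combineSys (hX : Disjoint X₁ X₂) (hF₁ : ∀ S ∈ F₁, S ⊆ X₁)
    (hF₂ : ∀ T ∈ F₂, T ⊆ X₂) (hemptyF₁ : ∅ ∈ F₁) (hemptyF₂ : ∅ ∈ F₂) (hXF₁ : X₁ ∈ F₁)
    (hXF₂ : X₂ ∈ F₂) (hH₁ : IsHomog X₁ F₁ H₁) (hH₂ : IsHomog X₂ F₂ H₂) :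
    IsHomog (X₁ ∪ X₂) (combineSys H₁ H₂ F₁ F₂) (H₁ ∪ H₂) := by
  obtain ⟨hH₁X, hH₁card, hF₁H₁, hH₁max⟩ := hH₁
  obtain ⟨hH₂X, -, hF₂H₂, hH₂max⟩ := hH₂
  refine ⟨union_subset_union hH₁X hH₂X, hH₁card.trans (card_le_card subset_union_left),
    atomProp_combineSys hX hF₁ hF₂ hH₁X hH₂X, fun H hHX hH hGH => ?_⟩
  have h₁ : H ∩ X₁ = H₁ := hH₁max _ inter_subset_right
    (subset_inter (subset_union_left.trans hH) hH₁X)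
    (hGH.inter_of_forall_exists hX (exists_mem_combineSys_between hemptyF₂ hXF₂ hH₂X hF₁H₁))
  rw [combineSys_comm] at hGH
  have h₂ : H ∩ X₂ = H₂ := hH₂max _ inter_subset_right
    (subset_inter (subset_union_right.trans hH) hH₂X)
    (hGH.inter_of_forall_exists hX.symm (exists_mem_combineSys_between hemptyF₁ hXF₁ hH₁X hF₂H₂))
  rw [← inter_eq_left.2 hHX, inter_union_distrib_left, h₁, h₂]

end CombineSys

theorem stmt_7_general (X₁ X₂ : Finset α) (hdisj : Disjoint X₁ X₂)
    (F₁ F₂ : Finset (Finset α)) (k₁ k₂ : ℕ) (H₁ H₂ : Finset α)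
    (h1 : IsSatSperner X₁ F₁ k₁) (h2 : IsSatSperner X₂ F₂ k₂)
    (he1 : ∅ ∈ F₁) (he2 : ∅ ∈ F₂) (hx1 : X₁ ∈ F₁) (hx2 : X₂ ∈ F₂)
    (hH1 : IsHomog X₁ F₁ H₁) (hH2 : IsHomog X₂ F₂ H₂) :
    IsSatSperner (X₁ ∪ X₂) (combineSys H₁ H₂ F₁ F₂) (k₁ + k₂ - 2) ∧
      ∅ ∈ combineSys H₁ H₂ F₁ F₂ ∧ X₁ ∪ X₂ ∈ combineSys H₁ H₂ F₁ F₂ ∧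
      IsHomog (X₁ ∪ X₂) (combineSys H₁ H₂ F₁ F₂) (H₁ ∪ H₂) := by
  have ⟨hH₁X, hH₁card, hF₁H₁, _⟩ := hH1
  have ⟨hH₂X, hH₂card, hF₂H₂, _⟩ := hH2
  have hH₁ : H₁.Nonempty := card_pos.1 (by omega)
  have hH₂ : H₂.Nonempty := card_pos.1 (by omega)
  refine ⟨⟨fun C hC => subset_union_of_mem_combineSys h1.1 h2.1 hC,
      not_hasChain_combineSys hdisj h1.1 h2.1 h1.2.1 h2.2.1 he1 he2 hx1 hx2 hH₁X hH₂X hH₁ hH₂,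
      fun S hSX hSG => hasChain_insert_combineSys hdisj h1 h2 he1 he2 hx1 hx2 hH₁X hH₂X hH₁card
        hH₂card hF₁H₁ hF₂H₂ hSX hSG⟩,
    empty_mem_combineSys he1 he2,
    union_mem_combineSys_of_large hx1 hx2 hH₁X hH₂X,
    isHomog_combineSys hdisj h1.1 h2.1 he1 he2 hx1 hx2 hH1 hH2⟩

theorem stmt_7 (X₁ X₂ : Finset α) (hdisj : Disjoint X₁ X₂)
    (F₁ F₂ : Finset (Finset α)) (k₁ k₂ : ℕ) (H₁ H₂ : Finset α)
    (h1 : IsSatSperner X₁ F₁ k₁) (h2 : IsSatSperner X₂ F₂ k₂)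
    (he1 : ∅ ∈ F₁) (he2 : ∅ ∈ F₂) (hx1 : X₁ ∈ F₁) (hx2 : X₂ ∈ F₂)
    (hH1 : IsHomog X₁ F₁ H₁) (hH2 : IsHomog X₂ F₂ H₂)
    (hsl1 : ∀ S ∈ F₁, S ∩ H₁ = ∅ ∨ H₁ ⊆ S) (hsl2 : ∀ S ∈ F₂, S ∩ H₂ = ∅ ∨ H₂ ⊆ S) :
    IsSatSperner (X₁ ∪ X₂) (combineSys H₁ H₂ F₁ F₂) (k₁ + k₂ - 2) ∧
      ∅ ∈ combineSys H₁ H₂ F₁ F₂ ∧ X₁ ∪ X₂ ∈ combineSys H₁ H₂ F₁ F₂ ∧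
      IsHomog (X₁ ∪ X₂) (combineSys H₁ H₂ F₁ F₂) (H₁ ∪ H₂) :=
  stmt_7_general X₁ X₂ hdisj F₁ F₂ k₁ k₂ H₁ H₂ h1 h2 he1 he2 hx1 hx2 hH1 hH2
end

section
/- Let A ⊆ P(X) be a saturated antichain such that every member of A has cardinality between 1 and |X| - k + 2, where k ≥ 2 and |X| is sufficiently large (|X| ≥ 2k suffices), and suppose A has a homogeneous set H. Then |A| ≥ k - 1. -/
/-!
Fix `a ≠ b` in `H`; every member containing `b` contains `a`. A set `T ⊆ X` with `b ∈ T`,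
`a ∉ T` and `|T| ≥ m`, the largest member size, is not a member and lies below none, so by
saturation it contains a member `A`. Then `A` misses `a`, hence `b`, and deleting a point of `A`
from `T` loses `A` but keeps `b`. Iterating from `T = X \ {a}` yields `|X| - m = k - 2` members
missing `a`; one more member contains `H`.
-/

open Finset

variable {α : Type*} [DecidableEq α]

theorem le_card_filter_subset_of_saturated {X T : Finset α} {𝒜 : Finset (Finset α)} {a b : α}
    {m : ℕ} (hsat : ∀ S ⊆ X, S ∉ 𝒜 → ∃ A ∈ 𝒜, A ⊂ S ∨ S ⊂ A)
    (hne : ∀ A ∈ 𝒜, A.Nonempty) (hm : ∀ A ∈ 𝒜, A.card ≤ m) (hba : ∀ A ∈ 𝒜, b ∈ A → a ∈ A)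
    (hTX : T ⊆ X) (ha : a ∉ T) (hb : b ∈ T) :
    T.card + 1 - m ≤ (𝒜.filter (· ⊆ T)).card := by
  induction T using Finset.strongInduction with
  | H T ih =>
    by_cases hTm : T.card < m
    · omega
    have hT : T ∉ 𝒜 := fun hT => ha (hba T hT hb)
    obtain ⟨A, hA, hAT⟩ : ∃ A ∈ 𝒜, A ⊂ T := by
      obtain ⟨A, hA, hAT | hTA⟩ := hsat T hTX hT
      · exact ⟨A, hA, hAT⟩
      · have := card_lt_card hTA
        have := hm A hA
        omega
    obtain ⟨y, hy⟩ := hne A hA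
    have hyb : y ≠ b := by
      rintro rfl
      exact ha (hAT.subset (hba A hA hy))
    have hyT : y ∈ T := hAT.subset hy
    have ih' := ih (T.erase y) (erase_ssubset hyT) ((erase_subset y T).trans hTX)
      (fun h => ha (mem_of_mem_erase h)) (mem_erase.mpr ⟨hyb.symm, hb⟩)
    have hlt : (𝒜.filter (· ⊆ T.erase y)).card < (𝒜.filter (· ⊆ T)).card := by
      refine card_lt_card ⟨monotone_filter_right 𝒜 fun B _ hB => hB.trans (erase_subset y T), ?_⟩
      intro h
      exact notMem_erase y T ((mem_filter.mp (h (mem_filter.mpr ⟨hA, hAT.subset⟩))).2 hy)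
    rw [card_erase_of_mem hyT] at ih'
    omega

theorem AtomProp.mem_of_mem {𝒜 : Finset (Finset α)} {H A : Finset α} {a b : α}
    (hatom : AtomProp 𝒜 H) (hA : A ∈ 𝒜) (ha : a ∈ H) (hb : b ∈ H) (hbA : b ∈ A) : a ∈ A := by
  rcases hatom A hA with hdisj | hHA
  · exact absurd (mem_inter.mpr ⟨hbA, hb⟩) (hdisj ▸ notMem_empty b)
  · exact hHA ha

theorem exists_mem_superset_of_atomProp {X H : Finset α} {𝒜 : Finset (Finset α)}
    (hsat : ∀ S ⊆ X, S ∉ 𝒜 → ∃ A ∈ 𝒜, A ⊂ S ∨ S ⊂ A) (hne : ∀ A ∈ 𝒜, A.Nonempty)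
    (hHX : H ⊆ X) (hatom : AtomProp 𝒜 H) : ∃ A ∈ 𝒜, H ⊆ A := by
  by_cases hH : H ∈ 𝒜
  · exact ⟨H, hH, subset_rfl⟩
  obtain ⟨A, hA, hAH | hHA⟩ := hsat H hHX hH
  · rcases hatom A hA with hdisj | hsub
    · rw [inter_eq_left.mpr hAH.subset] at hdisj
      exact absurd hdisj (hne A hA).ne_empty
    · exact absurd hsub hAH.not_subset
  · exact ⟨A, hA, hHA.subset⟩

theorem stmt_13_general (X : Finset α) (𝒜 : Finset (Finset α)) (k : ℕ)
    (hX : 2 * k ≤ X.card) (hsat : IsSatAntichain X 𝒜)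
    (hcard : ∀ A ∈ 𝒜, 1 ≤ A.card ∧ A.card ≤ X.card - k + 2)
    (H : Finset α) (hH : IsHomog X 𝒜 H) :
    k - 1 ≤ 𝒜.card := by
  obtain ⟨hHX, hH2, hatom, -⟩ := hH
  obtain ⟨a, ha, b, hb, hab⟩ := one_lt_card.mp hH2
  have hne : ∀ A ∈ 𝒜, A.Nonempty := fun A hA => card_pos.mp (hcard A hA).1
  obtain ⟨A₀, hA₀, hHA₀⟩ := exists_mem_superset_of_atomProp hsat.2.2 hne hHX hatom
  have hlower := le_card_filter_subset_of_saturated hsat.2.2 hne (fun A hA => (hcard A hA).2)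
    (fun A hA => hatom.mem_of_mem hA ha hb) (erase_subset a X) (notMem_erase a X)
    (mem_erase.mpr ⟨hab.symm, hHX hb⟩)
  have hlt : (𝒜.filter (· ⊆ X.erase a)).card < 𝒜.card :=
    card_lt_card (filter_ssubset.mpr ⟨A₀, hA₀, fun h => notMem_erase a X (h (hHA₀ ha))⟩)
  rw [card_erase_of_mem (hHX ha)] at hlower
  omega

theorem stmt_13 (X : Finset α) (𝒜 : Finset (Finset α)) (k : ℕ) (hk : 2 ≤ k)
    (hX : 2 * k ≤ X.card) (hsat : IsSatAntichain X 𝒜)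
    (hcard : ∀ A ∈ 𝒜, 1 ≤ A.card ∧ A.card ≤ X.card - k + 2)
    (H : Finset α) (hH : IsHomog X 𝒜 H) :
    k - 1 ≤ 𝒜.card :=
  stmt_13_general X 𝒜 k hX hsat hcard H hH
end

section
/- Let X be a finite set and F ⊆ P(X) an oversaturated k-Sperner system with a homogeneous set H, where |H| ≥ 2. Let x₁ ∈ H and set X₁ = X \ {x₁}. Define F₁ = {S ∈ F : S ∩ H = ∅} ∪ {S \ {x₁} : S ∈ F, H ⊆ S}. Then F₁ ⊆ P(X₁) is an oversaturated k-Sperner system with |F₁| = |F|, and F₁ contains the same number of (k+1)-chains as F. -/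
open Finset

variable {α : Type*} [DecidableEq α]

/-- The shrunken system on the ground set `X \ {x₁}`. -/
def shrinkSys (H : Finset α) (x₁ : α) (F : Finset (Finset α)) : Finset (Finset α) :=
  (F.filter fun S => S ∩ H = ∅) ∪ (F.filter fun S => H ⊆ S).image (fun S => S.erase x₁)

/-!
Every member of `F` contains `H` or misses it, so two distinct points `x₁, x₂ ∈ H` are *twins*
for `F`: they lie in exactly the same members. Deleting a point that has a twin is an order
embedding on the family, and `F₁` is the image of `F` under deleting `x₁`; this gives
`|F₁| = |F|` and the equality of chain counts. For oversaturation, a set `S ⊆ X \ {x₁}` outside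
`F₁` is lifted to `T = S ∪ {x₁}` if `x₂ ∈ S` and to `T = S` otherwise: `x₁, x₂` remain twins for
`F ∪ {T}`, whose image is `F₁ ∪ {S}`, so the chain count of `F₁ ∪ {S}` is that of `F ∪ {T}`.
-/

section OrderEmbedding

variable {f : Finset α → Finset α} {𝒜 : Finset (Finset α)}

omit [DecidableEq α] in
theorem injOn_of_subset_iff (hf : ∀ A ∈ 𝒜, ∀ B ∈ 𝒜, f A ⊆ f B ↔ A ⊆ B) :
    Set.InjOn f 𝒜 := fun A hA B hB hAB =>
  subset_antisymm ((hf A hA B hB).1 hAB.subset) ((hf B hB A hA).1 hAB.symm.subset)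

omit [DecidableEq α] in
theorem ssubset_iff_of_subset_iff (hf : ∀ A ∈ 𝒜, ∀ B ∈ 𝒜, f A ⊆ f B ↔ A ⊆ B)
    {A B : Finset α} (hA : A ∈ 𝒜) (hB : B ∈ 𝒜) : f A ⊂ f B ↔ A ⊂ B := by
  rw [ssubset_iff_subset_not_subset, ssubset_iff_subset_not_subset, hf A hA B hB, hf B hB A hA]

theorem chainCount_image_of_subset_iff (hf : ∀ A ∈ 𝒜, ∀ B ∈ 𝒜, f A ⊆ f B ↔ A ⊆ B) (m : ℕ) :
    chainCount (𝒜.image f) m = chainCount 𝒜 m := by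
  symm
  refine Nat.card_eq_of_bijective (fun C => ⟨f ∘ C.1, fun i j hij =>
    (ssubset_iff_of_subset_iff hf (C.2.2 i) (C.2.2 j)).2 (C.2.1 hij),
    fun i => mem_image_of_mem f (C.2.2 i)⟩) ⟨?_, ?_⟩
  · intro C D hCD
    exact Subtype.ext <| funext fun i =>
      injOn_of_subset_iff hf (C.2.2 i) (D.2.2 i) (congrFun (congrArg Subtype.val hCD) i)
  · rintro ⟨D, hD, hDmem⟩
    choose C hC hCD using fun i => mem_image.1 (hDmem i)
    refine ⟨⟨C, fun i j hij => (ssubset_iff_of_subset_iff hf (hC i) (hC j)).1 ?_, hC⟩,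
      Subtype.ext (funext hCD)⟩
    rw [hCD i, hCD j]
    exact hD hij

end OrderEmbedding

section EraseTwin

variable {x y : α} {𝒜 : Finset (Finset α)}

theorem erase_subset_erase_iff_of_mem_imp (hxy : x ≠ y) {A B : Finset α}
    (hA : x ∈ A → y ∈ A) (hB : y ∈ B → x ∈ B) : A.erase x ⊆ B.erase x ↔ A ⊆ B := by
  refine ⟨fun h z hz => ?_, fun h => erase_subset_erase x h⟩
  obtain rfl | hzx := eq_or_ne z x
  · exact hB (mem_of_mem_erase (h (mem_erase.2 ⟨hxy.symm, hA hz⟩)))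
  · exact mem_of_mem_erase (h (mem_erase.2 ⟨hzx, hz⟩))

theorem erase_subset_erase_iff_of_twin (hxy : x ≠ y) (h𝒜 : ∀ A ∈ 𝒜, x ∈ A ↔ y ∈ A) :
    ∀ A ∈ 𝒜, ∀ B ∈ 𝒜, A.erase x ⊆ B.erase x ↔ A ⊆ B := fun A hA B hB =>
  erase_subset_erase_iff_of_mem_imp hxy (h𝒜 A hA).1 (h𝒜 B hB).2

theorem card_image_erase_of_twin (hxy : x ≠ y) (h𝒜 : ∀ A ∈ 𝒜, x ∈ A ↔ y ∈ A) :
    (𝒜.image (·.erase x)).card = 𝒜.card :=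
  card_image_of_injOn (injOn_of_subset_iff (erase_subset_erase_iff_of_twin hxy h𝒜))

theorem chainCount_image_erase_of_twin (hxy : x ≠ y) (h𝒜 : ∀ A ∈ 𝒜, x ∈ A ↔ y ∈ A) (m : ℕ) :
    chainCount (𝒜.image (·.erase x)) m = chainCount 𝒜 m :=
  chainCount_image_of_subset_iff (erase_subset_erase_iff_of_twin hxy h𝒜) m

theorem IsOversat.image_erase_of_twin {X : Finset α} {k : ℕ} (h𝒜 : IsOversat X 𝒜 k)
    (hxX : x ∈ X) (hxy : x ≠ y) (htwin : ∀ A ∈ 𝒜, x ∈ A ↔ y ∈ A) :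
    IsOversat (X.erase x) (𝒜.image (·.erase x)) k := by
  refine ⟨fun B hB => ?_, fun S hS hS𝒜 => ?_⟩
  · obtain ⟨A, hA, rfl⟩ := mem_image.1 hB
    exact erase_subset_erase x (h𝒜.1 A hA)
  have hxS : x ∉ S := fun h => (mem_erase.1 (hS h)).1 rfl
  have hSX : S ⊆ X := hS.trans (erase_subset x X)
  obtain ⟨T, hTS, hTtwin, hTX⟩ : ∃ T, T.erase x = S ∧ (x ∈ T ↔ y ∈ T) ∧ T ⊆ X := by
    by_cases hyS : y ∈ S
    · exact ⟨insert x S, erase_insert hxS, by simp [hyS], insert_subset hxX hSX⟩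
    · exact ⟨S, erase_eq_of_notMem hxS, iff_of_false hxS hyS, hSX⟩
  have hT𝒜 : T ∉ 𝒜 := fun h => hS𝒜 (hTS ▸ mem_image_of_mem _ h)
  have hinsert : insert S (𝒜.image (·.erase x)) = (insert T 𝒜).image (·.erase x) := by
    rw [image_insert, hTS]
  have hTtwin𝒜 : ∀ A ∈ insert T 𝒜, x ∈ A ↔ y ∈ A := by
    simpa only [forall_mem_insert] using ⟨hTtwin, htwin⟩
  rw [hinsert, chainCount_image_erase_of_twin hxy htwin,
    chainCount_image_erase_of_twin hxy hTtwin𝒜]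
  exact h𝒜.2 T hTX hT𝒜

end EraseTwin

theorem notMem_of_inter_eq_empty {S H : Finset α} (hSH : S ∩ H = ∅) {x : α} (hx : x ∈ H) :
    x ∉ S :=
  disjoint_right.1 (disjoint_iff_inter_eq_empty.2 hSH) hx

theorem AtomProp.mem_iff_mem {𝒜 : Finset (Finset α)} {H : Finset α} (h : AtomProp 𝒜 H)
    {x y : α} (hx : x ∈ H) (hy : y ∈ H) {S : Finset α} (hS : S ∈ 𝒜) : x ∈ S ↔ y ∈ S := by
  rcases h S hS with hSH | hHS
  · exact iff_of_false (notMem_of_inter_eq_empty hSH hx) (notMem_of_inter_eq_empty hSH hy)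
  · exact iff_of_true (hHS hx) (hHS hy)

theorem shrinkSys_eq_image {F : Finset (Finset α)} {H : Finset α} {x : α} (hF : AtomProp F H)
    (hx : x ∈ H) : shrinkSys H x F = F.image (·.erase x) := by
  ext B
  simp only [shrinkSys, mem_union, mem_filter, mem_image]
  constructor
  · rintro (⟨hB, hBH⟩ | ⟨A, ⟨hA, -⟩, rfl⟩)
    · exact ⟨B, hB, erase_eq_of_notMem (notMem_of_inter_eq_empty hBH hx)⟩
    · exact ⟨A, hA, rfl⟩
  · rintro ⟨A, hA, rfl⟩
    rcases hF A hA with hAH | hHA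
    · rw [erase_eq_of_notMem (notMem_of_inter_eq_empty hAH hx)]
      exact Or.inl ⟨hA, hAH⟩
    · exact Or.inr ⟨A, ⟨hA, hHA⟩, rfl⟩

theorem stmt_15 (X : Finset α) (F : Finset (Finset α)) (k : ℕ)
    (hF : IsOversat X F k) (H : Finset α) (hH : IsHomog X F H)
    (x₁ : α) (hx : x₁ ∈ H) :
    IsOversat (X.erase x₁) (shrinkSys H x₁ F) k ∧
      (shrinkSys H x₁ F).card = F.card ∧
      chainCount (shrinkSys H x₁ F) (k + 1) = chainCount F (k + 1) := by
  obtain ⟨hHX, hHcard, hAtom, -⟩ := hH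
  obtain ⟨x₂, hx₂, hx₂₁⟩ := exists_mem_ne (one_lt_two.trans_le hHcard) x₁
  have htwin : ∀ S ∈ F, x₁ ∈ S ↔ x₂ ∈ S := fun S hS => hAtom.mem_iff_mem hx hx₂ hS
  rw [shrinkSys_eq_image hAtom hx]
  exact ⟨hF.image_erase_of_twin (hHX hx) hx₂₁.symm htwin,
    card_image_erase_of_twin hx₂₁.symm htwin,
    chainCount_image_erase_of_twin hx₂₁.symm htwin _⟩
end

section
/- Let k ≥ 1 and let X be a set with |X| = k² + k. For every t with 1 ≤ t ≤ k² + k there exist nonempty families F_t, G_t ⊆ P(X) such that: (a) for every F ∈ F_t and G ∈ G_t, |F| + |G| ≥ k; (b) |F_t| + |G_t| = O(k² 2^{k/2}); (c) for every S ⊆ X with |S| = t, there exist F ∈ F_t with F ⊊ S and G ∈ G_t with G ∩ S = ∅. -/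
open Finset

variable {α : Type*} [DecidableEq α]

/-!
Split `k = a + b` and let `F_t` consist of random `a`-subsets of `X`, `G_t` of random `b`-subsets.
A fixed `t`-set `S` contains a given random `a`-set with probability `C(t, a) / C(n, a)`, so by the
union bound over the at most `2 ^ n` sets `S`, some `n · C(n, a) / C(t, a) + 1` of them leave no
`t`-set uncovered; likewise `G_t` covers every complement `X \ S`. It remains to choose the split so
that both `C(n, a) / C(t, a) ≈ (n / t) ^ a` and `C(n, b) / C(n - t, b) ≈ (n / (n - t)) ^ b` are
`O(2 ^ (k / 2))`. With `p = t / n` this is possible because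
`1 / log p⁻¹ + 1 / log (1 - p)⁻¹ ≥ 2 / log 2`, with equality at `p = 1 / 2`.
-/

open Real

namespace Real

theorem log_two_mul_neg_log_one_sub_sub_log_one_add_le {y : ℝ} (hy₀ : 0 ≤ y) (hy : y ≤ 1 / 2) :
    log 2 * (-log (1 - y) - log (1 + y)) ≤ 2 * log (1 + y) * -log (1 - y) := by
  have hα : 2 / 3 * y ≤ log (1 + y) := by
    have h := one_sub_inv_le_log_of_pos (x := 1 + y) (by linarith)
    have : (1 + y)⁻¹ ≤ 1 - 2 / 3 * y := by
      rw [inv_le_iff_one_le_mul₀ (by linarith)]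
      nlinarith
    linarith
  have hβ : y ≤ -log (1 - y) := by
    linarith [log_le_sub_one_of_pos (x := 1 - y) (by linarith)]
  have hdiff : -log (1 - y) - log (1 + y) ≤ 4 / 3 * y ^ 2 := by
    have hsq : 0 < 1 - y ^ 2 := by nlinarith
    have h := one_sub_inv_le_log_of_pos hsq
    have : log (1 - y ^ 2) = log (1 - y) + log (1 + y) := by
      rw [← log_mul (by linarith) (by linarith)]; ring_nf
    have : (1 - y ^ 2)⁻¹ ≤ 1 + 4 / 3 * y ^ 2 := by
      rw [inv_le_iff_one_le_mul₀ hsq]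
      nlinarith [mul_nonneg (sq_nonneg y) (by nlinarith : 0 ≤ 1 / 4 - y ^ 2)]
    linarith
  have hlog2 : log 2 ≤ 1 := by linarith [log_two_lt_d9]
  nlinarith [mul_le_mul hα hβ hy₀ (by linarith), log_pos one_lt_two]

theorem two_mul_log_inv_mul_log_inv_le {p q : ℝ} (hp : 1 / 4 ≤ p) (hq : 1 / 4 ≤ q)
    (hpq : p + q = 1) : 2 * log p⁻¹ * log q⁻¹ ≤ log 2 * (log p⁻¹ + log q⁻¹) := by
  wlog hqp : q ≤ p generalizing p q
  · linarith [this hq hp (by linarith) (by linarith)]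
  have h := log_two_mul_neg_log_one_sub_sub_log_one_add_le (y := p - q) (by linarith) (by linarith)
  have hp' : p⁻¹ = 2 / (1 + (p - q)) := by
    rw [show 1 + (p - q) = 2 * p by linarith]; field_simp
  have hq' : q⁻¹ = 2 / (1 - (p - q)) := by
    rw [show 1 - (p - q) = 2 * q by linarith]; field_simp
  rw [hp', hq', log_div two_ne_zero (by linarith), log_div two_ne_zero (by linarith)]
  nlinarith

theorem two_pow_mul_one_sub_pow_lt_one {x : ℝ} {n m : ℕ} (hx : x ≤ 1) (h : n < m * x) :
    2 ^ n * (1 - x) ^ m < 1 := by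
  have h2 : (2 : ℝ) ^ n ≤ exp n := by
    rw [← exp_one_pow]
    gcongr
    linarith [add_one_le_exp 1]
  calc 2 ^ n * (1 - x) ^ m ≤ exp n * exp (-x) ^ m :=
        mul_le_mul h2 (pow_le_pow_left₀ (by linarith) (one_sub_le_exp_neg x) m) (by positivity)
          (by positivity)
    _ = exp (n - m * x) := by rw [← exp_nat_mul, ← exp_add]; ring_nf
    _ < 1 := exp_lt_one_iff.2 (by linarith)

theorem exp_eight_le : exp 8 ≤ 2 ^ 13 := by
  calc exp 8 = exp 1 ^ 8 := by rw [← exp_nat_mul]; norm_num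
    _ ≤ 2.7182818286 ^ 8 := by gcongr; exact exp_one_lt_d9.le
    _ ≤ 2 ^ 13 := by norm_num

end Real

theorem exists_subfamily_covering_of_card_lt (X : Finset α) {a τ m : ℕ}
    (h : X.card.choose τ * (X.card.choose a - τ.choose a) ^ m < X.card.choose a ^ m) :
    ∃ 𝒞 ⊆ X.powersetCard a, 𝒞.card ≤ m ∧ ∀ S ⊆ X, S.card = τ → ∃ A ∈ 𝒞, A ⊆ S := by
  by_contra! hbad
  -- union bound: each `m`-tuple of `a`-sets misses some `τ`-set
  have hsub : Fintype.piFinset (fun _ : Fin m => X.powersetCard a) ⊆ (X.powersetCard τ).biUnion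
      fun S => Fintype.piFinset fun _ => X.powersetCard a \ S.powersetCard a := by
    intro f hf
    rw [Fintype.mem_piFinset] at hf
    obtain ⟨S, hSX, hS, hmiss⟩ :=
      hbad (univ.image f) (image_subset_iff.2 fun i _ => hf i) (card_image_le.trans (by simp))
    simp only [mem_biUnion, Fintype.mem_piFinset, mem_sdiff, mem_powersetCard]
    exact ⟨S, ⟨hSX, hS⟩, fun i => ⟨mem_powersetCard.1 (hf i),
      fun hi => hmiss (f i) (mem_image_of_mem f (mem_univ i)) hi.1⟩⟩
  refine h.not_ge ?_
  calc X.card.choose a ^ m = (Fintype.piFinset fun _ : Fin m => X.powersetCard a).card := by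
        rw [Fintype.card_piFinset_const, card_powersetCard]
    _ ≤ (X.powersetCard τ).card * (X.card.choose a - τ.choose a) ^ m :=
      (card_le_card hsub).trans (card_biUnion_le_card_mul _ _ _ fun S hS => ?_)
    _ = X.card.choose τ * (X.card.choose a - τ.choose a) ^ m := by rw [card_powersetCard]
  rw [mem_powersetCard] at hS
  rw [Fintype.card_piFinset_const, card_sdiff_of_subset (powersetCard_mono hS.1),
    card_powersetCard, card_powersetCard, hS.2]

theorem exists_subfamily_covering (X : Finset α) {a τ : ℕ} {R : ℝ} (haτ : a ≤ τ)
    (hτX : τ ≤ X.card) (hR : (X.card.choose a : ℝ) ≤ R * τ.choose a) :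
    ∃ 𝒞 ⊆ X.powersetCard a, (𝒞.card : ℝ) ≤ X.card * R + 1 ∧
      ∀ S ⊆ X, S.card = τ → ∃ A ∈ 𝒞, A ⊆ S := by
  set n := X.card
  set N := n.choose a
  set M := τ.choose a
  have hM : (0 : ℝ) < M := by exact_mod_cast Nat.choose_pos haτ
  have hMN : M ≤ N := Nat.choose_le_choose a hτX
  have hN : (0 : ℝ) < N := hM.trans_le (by exact_mod_cast hMN)
  set m := ⌊(n * N / M : ℝ)⌋₊ + 1
  have hm : (m : ℝ) ≤ n * R + 1 := by
    have : (N : ℝ) / M ≤ R := (div_le_iff₀ hM).2 hR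
    have : (n * N / M : ℝ) ≤ n * R := by rw [mul_div_assoc]; gcongr
    push_cast [m]
    linarith [Nat.floor_le (by positivity : (0 : ℝ) ≤ n * N / M)]
  have hcount : n.choose τ * (N - M) ^ m < N ^ m := by
    have hlt : (n : ℝ) < m * (M / N) := by
      rw [← mul_div_assoc, lt_div_iff₀ hN, ← div_lt_iff₀ hM]
      push_cast [m]
      exact Nat.lt_floor_add_one _
    have key := two_pow_mul_one_sub_pow_lt_one ((div_le_one hN).2 (by exact_mod_cast hMN)) hlt
    have hsub : ((N - M : ℕ) : ℝ) = N * (1 - M / N) := by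
      rw [Nat.cast_sub hMN]; field_simp
    have : (n.choose τ : ℝ) * ((N - M : ℕ) : ℝ) ^ m < (N : ℝ) ^ m :=
      calc (n.choose τ : ℝ) * ((N - M : ℕ) : ℝ) ^ m ≤ 2 ^ n * ((N - M : ℕ) : ℝ) ^ m := by
            gcongr; exact_mod_cast Nat.choose_le_two_pow n τ
        _ = (2 ^ n * (1 - M / N) ^ m) * (N : ℝ) ^ m := by rw [hsub, mul_pow]; ring
        _ < 1 * (N : ℝ) ^ m := by gcongr
        _ = (N : ℝ) ^ m := one_mul _
    exact_mod_cast this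
  obtain ⟨𝒞, h𝒞X, h𝒞m, h𝒞⟩ := exists_subfamily_covering_of_card_lt X hcount
  exact ⟨𝒞, h𝒞X, (Nat.cast_le.2 h𝒞m).trans hm, h𝒞⟩

theorem Nat.choose_le_exp_mul_div_pow_mul_choose {n m a : ℕ} (hmn : m ≤ n) (ham : 2 * a ≤ m) :
    (n.choose a : ℝ) ≤ exp (2 * a ^ 2 / m) * ((n : ℝ) / m) ^ a * m.choose a := by
  obtain rfl | hm := m.eq_zero_or_pos
  · obtain rfl : a = 0 := by omega
    simp
  have hm' : (0 : ℝ) < m := by exact_mod_cast hm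
  have hcast : ((m + 1 - a : ℕ) : ℝ) = m + 1 - a := by
    rw [Nat.cast_sub (by omega)]; push_cast; ring
  -- `C(n, a) ≤ n ^ a / a!` and `(m + 1 - a) ^ a / a! ≤ C(m, a)`, so compare `n` with `m + 1 - a`
  have hfactor : (n : ℝ) ≤ (n / m * exp (2 * a / m)) * (m + 1 - a : ℕ) := by
    have ham' : 2 * (a : ℝ) ≤ m := by exact_mod_cast ham
    have h : (m : ℝ) ≤ (1 + 2 * a / m) * (m + 1 - a) := by
      rw [show (1 + 2 * a / m) * (m + 1 - a) = (m + 2 * a) * (m + 1 - a) / (m : ℝ) by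
        field_simp, le_div_iff₀ hm']
      nlinarith
    calc (n : ℝ) = n / m * m := by field_simp
      _ ≤ n / m * ((1 + 2 * a / m) * (m + 1 - a)) := by gcongr
      _ ≤ n / m * (exp (2 * a / m) * (m + 1 - a)) := by
        gcongr
        · linarith
        · linarith [add_one_le_exp (2 * a / m)]
      _ = _ := by rw [hcast]; ring
  calc (n.choose a : ℝ) ≤ n ^ a / a.factorial := Nat.choose_le_pow_div a n
    _ ≤ (n / m * exp (2 * a / m)) ^ a * ((m + 1 - a : ℕ) ^ a / a.factorial) := by
      rw [← mul_div_assoc, ← mul_pow]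
      gcongr
    _ ≤ (n / m * exp (2 * a / m)) ^ a * m.choose a := by
      gcongr
      exact_mod_cast Nat.pow_le_choose a m
    _ = exp (2 * a ^ 2 / m) * ((n : ℝ) / m) ^ a * m.choose a := by
      rw [mul_pow, ← exp_nat_mul]
      ring_nf

/-- The factor `2 ^ 42 ≥ 2 ^ (k ^ 2 + k)` absorbs the cases `k ≤ 6`, which are too small for the
asymptotic estimates. -/
noncomputable def splitBound (k : ℕ) : ℝ := 2 ^ 42 * 2 ^ ((k : ℝ) / 2)

lemma one_le_splitBound (k : ℕ) : 1 ≤ splitBound k :=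
  one_le_mul_of_one_le_of_one_le (one_le_pow₀ one_le_two) (one_le_rpow one_le_two (by positivity))

theorem choose_le_splitBound_mul_choose {n m a k : ℕ} (hmn : m ≤ n) (hak : a ≤ k)
    (hkm : 2 * k ≤ m) (hk : k ^ 2 ≤ 4 * m)
    (hlog : a * log (n / m) ≤ ((k : ℝ) / 2 + 2) * log 2) :
    (n.choose a : ℝ) ≤ splitBound k * m.choose a := by
  have hexp : exp (2 * a ^ 2 / m) ≤ 2 ^ 13 := by
    refine le_trans (exp_le_exp.2 ?_) exp_eight_le
    have : a ^ 2 ≤ 4 * m := (Nat.pow_le_pow_left hak 2).trans hk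
    exact div_le_of_le_mul₀ (by positivity) (by norm_num)
      (by exact_mod_cast (by omega : 2 * a ^ 2 ≤ 8 * m))
  have hpow : ((n : ℝ) / m) ^ a ≤ 2 ^ 2 * 2 ^ ((k : ℝ) / 2) := by
    calc ((n : ℝ) / m) ^ a ≤ exp (log (((n : ℝ) / m) ^ a)) := le_exp_log _
      _ ≤ exp (((k : ℝ) / 2 + 2) * log 2) := by rwa [exp_le_exp, log_pow]
      _ = 2 ^ 2 * 2 ^ ((k : ℝ) / 2) := by
        rw [mul_comm, ← rpow_def_of_pos two_pos, rpow_add two_pos, mul_comm]; norm_num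
  calc (n.choose a : ℝ) ≤ exp (2 * a ^ 2 / m) * ((n : ℝ) / m) ^ a * m.choose a :=
        Nat.choose_le_exp_mul_div_pow_mul_choose hmn (by omega)
    _ ≤ 2 ^ 13 * (2 ^ 2 * 2 ^ ((k : ℝ) / 2)) * m.choose a := by gcongr
    _ ≤ splitBound k * m.choose a := by
      rw [splitBound, ← mul_assoc]; gcongr; norm_num

theorem exists_add_eq_mul_le_of_le_div_add_div (k : ℕ) {c x y : ℝ} (hc : 0 ≤ c) (hx : 0 < x)
    (hy : 0 < y) (h : k + 1 ≤ c / x + c / y) :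
    ∃ a b : ℕ, a + b = k ∧ a * x ≤ c ∧ b * y ≤ c := by
  refine ⟨min k ⌊c / x⌋₊, k - min k ⌊c / x⌋₊, by omega, ?_, ?_⟩
  · rw [← le_div_iff₀ hx]
    exact (Nat.cast_le.2 (min_le_right _ _)).trans (Nat.floor_le (by positivity))
  · rw [← le_div_iff₀ hy]
    rcases le_total k ⌊c / x⌋₊ with hkc | hck
    · simp [min_eq_left hkc]; positivity
    · rw [min_eq_right hck, Nat.cast_sub hck]
      linarith [Nat.lt_floor_add_one (c / x)]

theorem choose_le_splitBound_mul_choose_of_le_42 {n m a : ℕ} (k : ℕ) (hn : n ≤ 42) (ham : a ≤ m) :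
    (n.choose a : ℝ) ≤ splitBound k * m.choose a := by
  calc (n.choose a : ℝ) ≤ 2 ^ 42 := by
        exact_mod_cast (Nat.choose_le_two_pow _ _).trans (Nat.pow_le_pow_right two_pos hn)
    _ ≤ splitBound k * 1 := by
      rw [splitBound, mul_one]
      exact le_mul_of_one_le_right (by positivity) (one_le_rpow one_le_two (by positivity))
    _ ≤ splitBound k * m.choose a :=
      mul_le_mul_of_nonneg_left (by exact_mod_cast Nat.choose_pos ham)
        (zero_le_one.trans (one_le_splitBound k))

theorem choose_le_splitBound_mul_choose_of_three_mul_le {n m k : ℕ} (hk : k ^ 2 ≤ n)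
    (hk8 : 8 * k ≤ n) (hm : 3 * n ≤ 4 * m) (hmn : m ≤ n) :
    (n.choose k : ℝ) ≤ splitBound k * m.choose k := by
  refine choose_le_splitBound_mul_choose hmn le_rfl (by omega) (by omega) ?_
  obtain rfl | hk0 := k.eq_zero_or_pos
  · simp [log_nonneg one_le_two]
  have hm0 : (0 : ℝ) < m := by exact_mod_cast (by omega : 0 < m)
  have hratio : (n : ℝ) / m ≤ 4 / 3 := by
    rw [div_le_div_iff₀ hm0 (by norm_num)]
    exact_mod_cast (by omega : n * 3 ≤ 4 * m)
  have hlog : 2 * log (4 / 3) ≤ log 2 := by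
    rw [← log_rpow (by norm_num)]
    exact log_le_log (by positivity) (by norm_num)
  have : log ((n : ℝ) / m) ≤ log (4 / 3) :=
    log_le_log (div_pos (by exact_mod_cast (by omega : 0 < n)) hm0) hratio
  nlinarith [log_pos one_lt_two, (Nat.cast_nonneg k : (0 : ℝ) ≤ k)]

theorem exists_split_of_lt_four_mul {n k t u : ℕ} (hk : k ^ 2 ≤ n) (hk8 : 8 * k ≤ n)
    (htu : t + u = n) (ht : n < 4 * t) (hu : n < 4 * u) :
    ∃ a b : ℕ, a + b = k ∧ (n.choose a : ℝ) ≤ splitBound k * t.choose a ∧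
      (n.choose b : ℝ) ≤ splitBound k * u.choose b := by
  have hn : (0 : ℝ) < n := by exact_mod_cast (by omega : 0 < n)
  have ht0 : (0 : ℝ) < t := by exact_mod_cast (by omega : 0 < t)
  have hu0 : (0 : ℝ) < u := by exact_mod_cast (by omega : 0 < u)
  have hx : 0 < log (n / t) := log_pos ((one_lt_div ht0).2 (by exact_mod_cast (by omega : t < n)))
  have hy : 0 < log (n / u) := log_pos ((one_lt_div hu0).2 (by exact_mod_cast (by omega : u < n)))
  have hkey : 2 * log (n / t) * log (n / u) ≤ log 2 * (log (n / t) + log (n / u)) := by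
    have hnt : (n : ℝ) ≤ 4 * t := by exact_mod_cast ht.le
    have hnu : (n : ℝ) ≤ 4 * u := by exact_mod_cast hu.le
    have h := two_mul_log_inv_mul_log_inv_le (p := t / n) (q := u / n)
      (by rw [le_div_iff₀ hn]; linarith) (by rw [le_div_iff₀ hn]; linarith)
      (by rw [← add_div, div_eq_one_iff_eq hn.ne']; exact_mod_cast htu)
    rwa [inv_div, inv_div] at h
  have hc : k + 1 ≤ ((k : ℝ) / 2 + 2) * log 2 / log (n / t) +
      ((k : ℝ) / 2 + 2) * log 2 / log (n / u) := by
    rw [div_add_div _ _ hx.ne' hy.ne', le_div_iff₀ (mul_pos hx hy)]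
    nlinarith [mul_le_mul_of_nonneg_left hkey (by positivity : (0 : ℝ) ≤ k / 2 + 2), mul_pos hx hy]
  obtain ⟨a, b, hab, ha, hb⟩ :=
    exists_add_eq_mul_le_of_le_div_add_div k (by positivity) hx hy hc
  exact ⟨a, b, hab, choose_le_splitBound_mul_choose (by omega) (by omega) (by omega) (by omega) ha,
    choose_le_splitBound_mul_choose (by omega) (by omega) (by omega) (by omega) hb⟩

theorem exists_split {k t u : ℕ} (ht : 1 ≤ t) (htu : t + u = k ^ 2 + k) :
    ∃ a b : ℕ, a + b = k ∧ a < t ∧ b ≤ u ∧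
      ((k ^ 2 + k).choose a : ℝ) ≤ splitBound k * t.choose a ∧
      ((k ^ 2 + k).choose b : ℝ) ≤ splitBound k * u.choose b := by
  have hR : ∀ m : ℕ, ((k ^ 2 + k).choose 0 : ℝ) ≤ splitBound k * m.choose 0 := by
    simpa using one_le_splitBound k
  have hkk : k ≤ k ^ 2 := Nat.le_self_pow two_ne_zero k
  rcases lt_or_ge k 7 with hk7 | hk7
  · have hn : k ^ 2 + k ≤ 42 := by interval_cases k <;> norm_num
    exact ⟨min k (t - 1), k - min k (t - 1), by omega, by omega, by omega,
      choose_le_splitBound_mul_choose_of_le_42 k hn (by omega),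
      choose_le_splitBound_mul_choose_of_le_42 k hn (by omega)⟩
  have hk8 : 8 * k ≤ k ^ 2 + k := by nlinarith
  rcases le_or_gt (4 * t) (k ^ 2 + k) with ht4 | ht4
  · exact ⟨0, k, by omega, by omega, by omega, hR t,
      choose_le_splitBound_mul_choose_of_three_mul_le (by omega) hk8 (by omega) (by omega)⟩
  rcases le_or_gt (4 * u) (k ^ 2 + k) with hu4 | hu4
  · exact ⟨k, 0, by omega, by omega, by omega,
      choose_le_splitBound_mul_choose_of_three_mul_le (by omega) hk8 (by omega) (by omega), hR u⟩
  obtain ⟨a, b, hab, ha, hb⟩ := exists_split_of_lt_four_mul (by omega) hk8 htu ht4 hu4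
  exact ⟨a, b, hab, by omega, by omega, ha, hb⟩

theorem two_mul_mul_splitBound_add_one_le {k : ℕ} (hk : 1 ≤ k) :
    2 * ((k ^ 2 + k : ℕ) * splitBound k + 1) ≤ 2 ^ 45 * (k : ℝ) ^ 2 * 2 ^ ((k : ℝ) / 2) := by
  have hk' : (1 : ℝ) ≤ k := by exact_mod_cast hk
  have hP : (1 : ℝ) ≤ 2 ^ ((k : ℝ) / 2) := one_le_rpow one_le_two (by positivity)
  have hn : ((k ^ 2 + k : ℕ) : ℝ) ≤ 2 * (k : ℝ) ^ 2 := by push_cast; nlinarith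
  rw [splitBound]
  nlinarith [mul_le_mul_of_nonneg_right hn (by positivity : (0 : ℝ) ≤ 2 ^ 42 * 2 ^ ((k : ℝ) / 2)),
    one_le_mul_of_one_le_of_one_le (one_le_pow₀ hk' : (1 : ℝ) ≤ (k : ℝ) ^ 2) hP]

theorem stmt_17 :
    ∃ C : ℝ, 0 < C ∧ ∀ (α : Type) [DecidableEq α] (X : Finset α) (k : ℕ),
      1 ≤ k → X.card = k ^ 2 + k →
      ∀ t : ℕ, 1 ≤ t → t ≤ k ^ 2 + k →
        ∃ Ft Gt : Finset (Finset α), Ft.Nonempty ∧ Gt.Nonempty ∧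
          (∀ A ∈ Ft, A ⊆ X) ∧ (∀ B ∈ Gt, B ⊆ X) ∧
          (∀ A ∈ Ft, ∀ B ∈ Gt, k ≤ A.card + B.card) ∧
          ((Ft.card + Gt.card : ℝ) ≤ C * (k : ℝ) ^ 2 * (2 : ℝ) ^ ((k : ℝ) / 2)) ∧
          ∀ S ⊆ X, S.card = t → (∃ A ∈ Ft, A ⊂ S) ∧ (∃ B ∈ Gt, B ∩ S = ∅) := by
  refine ⟨2 ^ 45, by positivity, fun α _ X k hk hX t ht htn => ?_⟩
  obtain ⟨a, b, hab, hat, hbu, hFa, hGb⟩ := exists_split (k := k) (u := X.card - t) ht (by omega)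
  rw [← hX] at hFa hGb
  obtain ⟨Ft, hFX, hFcard, hFcov⟩ := exists_subfamily_covering X hat.le (by omega) hFa
  obtain ⟨Gt, hGX, hGcard, hGcov⟩ := exists_subfamily_covering X hbu (by omega) hGb
  have hinside : ∀ S ⊆ X, S.card = t → ∃ A ∈ Ft, A ⊂ S := fun S hSX hS => by
    obtain ⟨A, hA, hAS⟩ := hFcov S hSX hS
    have hAa := (mem_powersetCard.1 (hFX hA)).2
    exact ⟨A, hA, hAS.ssubset_of_ne (by rintro rfl; omega)⟩
  have houtside : ∀ S ⊆ X, S.card = t → ∃ B ∈ Gt, B ∩ S = ∅ := fun S hSX hS => by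
    obtain ⟨B, hB, hBS⟩ := hGcov (X \ S) sdiff_subset (by rw [card_sdiff_of_subset hSX, hX, hS])
    exact ⟨B, hB, disjoint_iff_inter_eq_empty.1 (subset_sdiff.1 hBS).2⟩
  obtain ⟨S, hSX, hS⟩ := exists_subset_card_eq (hX ▸ htn : t ≤ X.card)
  obtain ⟨A, hA, -⟩ := hinside S hSX hS
  obtain ⟨B, hB, -⟩ := houtside S hSX hS
  refine ⟨Ft, Gt, ⟨A, hA⟩, ⟨B, hB⟩, fun A hA => (mem_powersetCard.1 (hFX hA)).1,
    fun B hB => (mem_powersetCard.1 (hGX hB)).1, fun A hA B hB => ?_, ?_,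
    fun S hSX hS => ⟨hinside S hSX hS, houtside S hSX hS⟩⟩
  · rw [(mem_powersetCard.1 (hFX hA)).2, (mem_powersetCard.1 (hGX hB)).2, hab]
  · have hX' : (X.card : ℝ) = (k ^ 2 + k : ℕ) := by exact_mod_cast hX
    rw [hX'] at hFcard hGcard
    linarith [two_mul_mul_splitBound_add_one_le hk]
end
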